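/- arXiv:2602.12067 — 7 statements merged into one kernel-verified Lean document; each statement's English description precedes it below -/
import Mathlib

section
/- Let H be a complex Hilbert space, let A and G be bounded linear operators on H with G skew-adjoint (G* = −G), and let ψ ∈ H. Then ⟨e^{G}ψ, A e^{G}ψ⟩ = ⟨ψ, Aψ⟩ + ⟨ψ, [A,G]ψ⟩ + ∫₀¹ (1−λ) ⟨e^{λG}ψ, [[A,G],G] e^{λG}ψ⟩ dλ, where e^{λG} denotes the operator exponential and [X,Y] := XY − YX. -/
/-!
Put `f λ = ⟪e^{λG} ψ, A e^{λG} ψ⟫`. Since `d/dλ e^{λG} = G e^{λG}` and `G* = -G`, the derivative of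
`f` is the same expression with `A` replaced by `⁅A, G⁆`; applying this twice, the claim is
Taylor's formula `f 1 = f 0 + f' 0 + ∫₀¹ (1 - λ) f'' λ dλ`, which is integration by parts.
-/

open scoped InnerProductSpace
open NormedSpace

open intervalIntegral Set in
theorem taylor_integral_remainder_two {𝕜 : Type*} [RCLike 𝕜] {f f' f'' : ℝ → 𝕜}
    (hf : ∀ t ∈ uIcc (0 : ℝ) 1, HasDerivAt f (f' t) t)
    (hf' : ∀ t ∈ uIcc (0 : ℝ) 1, HasDerivAt f' (f'' t) t)
    (hf'' : IntervalIntegrable f'' MeasureTheory.volume 0 1) :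
    f 1 = f 0 + f' 0 + ∫ t in (0 : ℝ)..1, (1 - (t : 𝕜)) * f'' t := by
  have hweight : ∀ t ∈ uIcc (0 : ℝ) 1, HasDerivAt (fun t : ℝ => 1 - (t : 𝕜)) (-1) t :=
    fun t _ => by simpa using (RCLike.ofRealCLM (K := 𝕜)).hasDerivAt.const_sub 1
  have hf'_cont : ContinuousOn f' (uIcc 0 1) :=
    fun t ht => (hf' t ht).continuousAt.continuousWithinAt
  have hftc : ∫ t in (0 : ℝ)..1, f' t = f 1 - f 0 :=
    integral_eq_sub_of_hasDerivAt hf hf'_cont.intervalIntegrable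
  rw [integral_mul_deriv_eq_deriv_mul hweight hf' intervalIntegrable_const hf'']
  simp only [neg_one_mul, intervalIntegral.integral_neg, hftc]
  push_cast
  ring

section Skew

variable {𝕜 E : Type*} [RCLike 𝕜] [NormedAddCommGroup E] [InnerProductSpace 𝕜 E] [CompleteSpace E]

theorem inner_apply_left_of_adjoint_eq_neg {G : E →L[𝕜] E}
    (hG : ContinuousLinearMap.adjoint G = -G) (x y : E) : ⟪G x, y⟫_𝕜 = -⟪x, G y⟫_𝕜 := by
  rw [← ContinuousLinearMap.adjoint_inner_right, hG, neg_apply, inner_neg_right]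

end Skew

theorem hasDerivAt_exp_smul_apply {E : Type*} [NormedAddCommGroup E] [NormedSpace ℂ E]
    [CompleteSpace E]
    (G : E →L[ℂ] E) (ψ : E) (t : ℝ) :
    HasDerivAt (fun t : ℝ => exp (t • G) ψ) (G (exp (t • G) ψ)) t :=
  ((ContinuousLinearMap.apply ℂ E ψ).restrictScalars ℝ).hasFDerivAt.comp_hasDerivAt t
    (hasDerivAt_exp_smul_const' G t)

section Hilbert

variable {H : Type*} [NormedAddCommGroup H] [InnerProductSpace ℂ H] [CompleteSpace H]

theorem hasDerivAt_inner_exp_smul_apply (A : H →L[ℂ] H) {G : H →L[ℂ] H}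
    (hG : ContinuousLinearMap.adjoint G = -G) (ψ : H) (t : ℝ) :
    HasDerivAt (fun t : ℝ => ⟪exp (t • G) ψ, A (exp (t • G) ψ)⟫_ℂ)
      ⟪exp (t • G) ψ, ⁅A, G⁆ (exp (t • G) ψ)⟫_ℂ t := by
  have hexp := hasDerivAt_exp_smul_apply G ψ t
  have hA : HasDerivAt (fun t : ℝ => A (exp (t • G) ψ)) (A (G (exp (t • G) ψ))) t :=
    (A.restrictScalars ℝ).hasFDerivAt.comp_hasDerivAt t hexp
  refine (hexp.inner ℂ hA).congr_deriv ?_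
  rw [Ring.lie_def, sub_apply, inner_sub_right, mul_apply_eq_comp, mul_apply_eq_comp,
    inner_apply_left_of_adjoint_eq_neg hG]
  ring

end Hilbert

/-- Second-order Duhamel (Taylor) expansion: for bounded operators `A`, `G` on a complex
Hilbert space `H` with `G` skew-adjoint, and `ψ ∈ H`,
`⟨e^G ψ, A e^G ψ⟩ = ⟨ψ, Aψ⟩ + ⟨ψ, [A,G]ψ⟩ + ∫₀¹ (1−λ) ⟨e^{λG}ψ, [[A,G],G] e^{λG}ψ⟩ dλ`. -/
theorem duhamel_second_order
    {H : Type*} [NormedAddCommGroup H] [InnerProductSpace ℂ H] [CompleteSpace H]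
    (A G : H →L[ℂ] H) (hG : ContinuousLinearMap.adjoint G = -G) (ψ : H) :
    ⟪(exp G) ψ, A ((exp G) ψ)⟫_ℂ
      = ⟪ψ, A ψ⟫_ℂ + ⟪ψ, (A * G - G * A) ψ⟫_ℂ
        + ∫ l in (0:ℝ)..1, (1 - (l : ℂ)) *
            ⟪(exp (l • G)) ψ,
              (((A * G - G * A) * G - G * (A * G - G * A)) ((exp (l • G)) ψ))⟫_ℂ := by
  have hcont : Continuous fun t : ℝ => ⟪exp (t • G) ψ, ⁅⁅A, G⁆, G⁆ (exp (t • G) ψ)⟫_ℂ :=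
    continuous_iff_continuousAt.2 fun t =>
      (hasDerivAt_inner_exp_smul_apply ⁅⁅A, G⁆, G⁆ hG ψ t).continuousAt
  have htaylor := taylor_integral_remainder_two
    (fun t _ => hasDerivAt_inner_exp_smul_apply A hG ψ t)
    (fun t _ => hasDerivAt_inner_exp_smul_apply ⁅A, G⁆ hG ψ t) (hcont.intervalIntegrable 0 1)
  simp only [Ring.lie_def, one_smul, zero_smul, exp_zero, one_apply_eq_self] at htaylor
  exact htaylor
end

section
/- There exists a constant C > 0, independent of x, such that for every x ∈ (0,1] one has I₂(x) ≤ C, where I₂(x) = ∫_{ℝ³} dp ∫_{|r|<1<|r+p|} dr ∫_{|r'|<x<|r'−p|} dr' (|r+p|² − |r|² + |r'−p|² − |r'|²)^{−2}. -/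
open MeasureTheory
open scoped ENNReal

noncomputable abbrev E3 := EuclideanSpace ℝ (Fin 3)

/-- The Belyakov-type integral `I_s(x)` of Lemma B.1:
`I_s(x) = ∫ dp ∫_{|r|<1<|r+p|} dr ∫_{|r'|<x<|r'-p|} dr' (|r+p|² - |r|² + |r'-p|² - |r'|²)^{-s}`. -/
noncomputable def belyakovI (s : ℕ) (x : ℝ) : ℝ≥0∞ :=
  ∫⁻ p : E3, ∫⁻ r in {r : E3 | ‖r‖ < 1 ∧ 1 < ‖r + p‖},
    ∫⁻ r' in {r' : E3 | ‖r'‖ < x ∧ x < ‖r' - p‖},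
      ENNReal.ofReal (1 / (‖r + p‖ ^ 2 - ‖r‖ ^ 2 + ‖r' - p‖ ^ 2 - ‖r'‖ ^ 2) ^ s)

/-!
Since `(a + b)² ≥ a b`, the integrand is dominated by a product, so `I₂(x)` is at most
`∫ F₁(p) Fₓ(-p) dp`, where `F_R(q)` integrates `1 / (|u + q|² - |u|²)` over the crescent
`|u| < R < |u + q|`. After rotating `q` onto the first axis, the denominator is constant on each
slice orthogonal to `q`, and that slice is an annulus of area at most `π` times the denominator;
hence `F_R(q) ≤ 2πR`. For `|q| ≥ 4` and `R ≤ 1` the denominator is `≳ (1 + |q|)²` on a set of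
bounded volume. So `F_R(q) ≲ (1 + |q|)⁻²` uniformly in `R ≤ 1`, and `(1 + |p|)⁻⁴` is integrable
on `ℝ³`.
-/

open Metric Real Set WithLp

lemma setLIntegral_setLIntegral_inv_add_sq_le {α β : Type*} [MeasurableSpace α]
    [MeasurableSpace β] {μ : Measure α} {ν : Measure β} {s : Set α} {t : Set β} {f : α → ℝ}
    {g : β → ℝ} (hf : Measurable f) (hs : MeasurableSet s) (ht : MeasurableSet t)
    (hf₀ : ∀ a ∈ s, 0 < f a) (hg₀ : ∀ b ∈ t, 0 < g b) :
    ∫⁻ a in s, ∫⁻ b in t, ENNReal.ofReal (1 / (f a + g b) ^ 2) ∂ν ∂μ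
      ≤ (∫⁻ a in s, ENNReal.ofReal (1 / f a) ∂μ) * ∫⁻ b in t, ENNReal.ofReal (1 / g b) ∂ν := by
  rw [← lintegral_mul_const _ (by fun_prop)]
  refine setLIntegral_mono' hs fun a ha ↦ ?_
  rw [← lintegral_const_mul' _ _ ENNReal.ofReal_ne_top]
  refine setLIntegral_mono' ht fun b hb ↦ ?_
  have ha₀ := hf₀ a ha
  have hb₀ := hg₀ b hb
  rw [← ENNReal.ofReal_mul (by positivity)]
  refine ENNReal.ofReal_le_ofReal ?_
  rw [div_mul_div_comm, one_mul]
  exact one_div_le_one_div_of_le (by positivity) (by nlinarith)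

section Crescent

variable {F : Type*} [NormedAddCommGroup F]

def crescent (R : ℝ) (q : F) : Set F := {u | ‖u‖ < R ∧ R < ‖u + q‖}

lemma norm_add_sq_sub_norm_sq_pos {R : ℝ} {q u : F} (hu : u ∈ crescent R q) :
    0 < ‖u + q‖ ^ 2 - ‖u‖ ^ 2 := by
  obtain ⟨h₁, h₂⟩ := hu
  nlinarith [norm_nonneg u]

variable [MeasurableSpace F] [BorelSpace F]

lemma measurableSet_crescent (R : ℝ) (q : F) : MeasurableSet (crescent R q) :=
  (measurableSet_lt measurable_norm measurable_const).inter
    (measurableSet_lt measurable_const (measurable_id.add_const q).norm)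

variable [InnerProductSpace ℝ F] [FiniteDimensional ℝ F]

noncomputable def crescentIntegral (R : ℝ) (q : F) : ℝ≥0∞ :=
  ∫⁻ u in crescent R q, ENNReal.ofReal (1 / (‖u + q‖ ^ 2 - ‖u‖ ^ 2))

variable {G : Type*} [NormedAddCommGroup G] [InnerProductSpace ℝ G] [FiniteDimensional ℝ G]
  [MeasurableSpace G] [BorelSpace G]

lemma crescentIntegral_map (e : F ≃ₗᵢ[ℝ] G) (R : ℝ) (q : F) :
    crescentIntegral R (e q) = crescentIntegral R q := by
  have hpre : e ⁻¹' crescent R (e q) = crescent R q := by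
    ext u
    simp [crescent, ← map_add]
  rw [crescentIntegral, ← e.measurePreserving.setLIntegral_comp_preimage_emb
    e.toHomeomorph.measurableEmbedding, hpre]
  simp only [← map_add, LinearIsometryEquiv.norm_map]
  rfl

lemma crescentIntegral_eq_of_norm_eq (hdim : Module.finrank ℝ F = Module.finrank ℝ G)
    (R : ℝ) {q : F} {q' : G} (h : ‖q‖ = ‖q'‖) :
    crescentIntegral R q = crescentIntegral R q' := by
  let e : F ≃ₗᵢ[ℝ] G := (stdOrthonormalBasis ℝ F).equiv (stdOrthonormalBasis ℝ G) (finCongr hdim)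
  have heq : (e.trans (Submodule.reflection (ℝ ∙ (e q - q'))ᗮ)) q = q' :=
    Submodule.reflection_sub (by rw [e.norm_map, h])
  rw [← heq, crescentIntegral_map]

end Crescent

lemma volume_ball_sqrt (b : ℝ) :
    volume (ball (0 : EuclideanSpace ℝ (Fin 2)) √b) = ENNReal.ofReal (π * b) := by
  rw [EuclideanSpace.volume_ball_fin_two, ← ENNReal.ofReal_pow (sqrt_nonneg b),
    ← ENNReal.ofReal_mul (by positivity), mul_comm]
  rcases le_total 0 b with hb | hb
  · rw [sq_sqrt hb]
  · rw [sqrt_eq_zero'.2 hb, ENNReal.ofReal_of_nonpos (mul_nonpos_of_nonneg_of_nonpos pi_pos.le hb)]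
    simp

lemma volume_annulus_le (a b : ℝ) :
    volume {y : EuclideanSpace ℝ (Fin 2) | a < ‖y‖ ^ 2 ∧ ‖y‖ ^ 2 < b}
      ≤ ENNReal.ofReal (π * (b - a)) := by
  have mem_ball_sqrt : ∀ {c} {y : EuclideanSpace ℝ (Fin 2)}, ‖y‖ ^ 2 < c → y ∈ ball 0 √c :=
    fun {c y} h ↦ by simpa [lt_sqrt (norm_nonneg y)] using h
  rcases lt_or_ge a 0 with ha | ha
  · calc _ ≤ volume (ball (0 : EuclideanSpace ℝ (Fin 2)) √b) :=
          measure_mono fun y hy ↦ mem_ball_sqrt hy.2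
      _ ≤ _ := by
          rw [volume_ball_sqrt]
          exact ENNReal.ofReal_le_ofReal (by nlinarith [pi_pos])
  rcases le_or_gt b a with hab | hab
  · have hempty : {y : EuclideanSpace ℝ (Fin 2) | a < ‖y‖ ^ 2 ∧ ‖y‖ ^ 2 < b} = ∅ :=
      eq_empty_of_forall_notMem fun y hy ↦ by linarith [hy.1, hy.2]
    simp [hempty]
  calc _ ≤ volume (ball (0 : EuclideanSpace ℝ (Fin 2)) √b \ closedBall 0 √a) :=
        measure_mono fun y hy ↦ ⟨mem_ball_sqrt hy.2,
          by simpa [le_sqrt (norm_nonneg y) ha] using hy.1⟩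
    _ = volume (ball (0 : EuclideanSpace ℝ (Fin 2)) √b) - volume (closedBall 0 √a) :=
        measure_sdiff (closedBall_subset_ball (sqrt_lt_sqrt ha hab))
          measurableSet_closedBall.nullMeasurableSet measure_closedBall_lt_top.ne
    _ = ENNReal.ofReal (π * (b - a)) := by
        rw [Measure.addHaar_closedBall_eq_addHaar_ball, volume_ball_sqrt, volume_ball_sqrt,
          ← ENNReal.ofReal_sub _ (by positivity), mul_sub]

lemma norm_toLp_prod_sq {E : Type*} [SeminormedAddCommGroup E] (t : ℝ) (y : E) :
    ‖toLp 2 (t, y)‖ ^ 2 = t ^ 2 + ‖y‖ ^ 2 := by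
  simp [WithLp.prod_norm_sq_eq_of_L2]

lemma toLp_prod_add_toLp_zero {E : Type*} [SeminormedAddCommGroup E] (t ρ : ℝ) (y : E) :
    toLp 2 (t, y) + toLp 2 (ρ, 0) = toLp 2 (t + ρ, y) := by
  rw [← WithLp.toLp_add, Prod.mk_add_mk, add_zero]

lemma mul_volume_crescent_slice_le (R ρ t : ℝ) :
    ENNReal.ofReal (1 / ((t + ρ) ^ 2 - t ^ 2)) *
        volume ((fun y ↦ toLp 2 (t, y)) ⁻¹'
          crescent R (toLp 2 (ρ, (0 : EuclideanSpace ℝ (Fin 2)))))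
      ≤ (Ioo (-R) R).indicator (fun _ ↦ ENNReal.ofReal π) t := by
  set S := (fun y ↦ toLp 2 (t, y)) ⁻¹' crescent R (toLp 2 (ρ, (0 : EuclideanSpace ℝ (Fin 2))))
  rcases S.eq_empty_or_nonempty with hempty | ⟨y₀, hy₀⟩
  · simp [hempty]
  have hannulus : S ⊆ {y | R ^ 2 - (t + ρ) ^ 2 < ‖y‖ ^ 2 ∧ ‖y‖ ^ 2 < R ^ 2 - t ^ 2} := by
    rintro y ⟨h₁, h₂⟩
    rw [toLp_prod_add_toLp_zero] at h₂
    have hnorm := norm_toLp_prod_sq t y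
    have hnorm' := norm_toLp_prod_sq (t + ρ) y
    constructor <;> nlinarith [norm_nonneg (toLp 2 (t, y))]
  obtain ⟨h₁, h₂⟩ := hannulus hy₀
  have ht : t ∈ Ioo (-R) R := by
    have hy₀R := hy₀.1
    constructor <;> nlinarith [norm_nonneg (toLp 2 (t, y₀)), norm_toLp_prod_sq t y₀, sq_nonneg ‖y₀‖]
  have hc : 0 < (t + ρ) ^ 2 - t ^ 2 := by linarith
  calc _ ≤ ENNReal.ofReal (1 / ((t + ρ) ^ 2 - t ^ 2)) *
          ENNReal.ofReal (π * ((R ^ 2 - t ^ 2) - (R ^ 2 - (t + ρ) ^ 2))) := by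
        gcongr
        exact (measure_mono hannulus).trans (volume_annulus_le _ _)
    _ = ENNReal.ofReal π := by
        rw [← ENNReal.ofReal_mul (by positivity)]
        congr 1
        field_simp
        ring
    _ = _ := (indicator_of_mem ht (fun _ ↦ ENNReal.ofReal π)).symm

lemma crescentIntegral_toLp_le (R ρ : ℝ) :
    crescentIntegral R (toLp 2 (ρ, (0 : EuclideanSpace ℝ (Fin 2))))
      ≤ ENNReal.ofReal (2 * π * R) := by
  set q := toLp 2 (ρ, (0 : EuclideanSpace ℝ (Fin 2)))
  set f : WithLp 2 (ℝ × EuclideanSpace ℝ (Fin 2)) → ℝ≥0∞ :=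
    fun u ↦ ENNReal.ofReal (1 / (‖u + q‖ ^ 2 - ‖u‖ ^ 2))
  have hf : ∀ t y, f (toLp 2 (t, y)) = ENNReal.ofReal (1 / ((t + ρ) ^ 2 - t ^ 2)) := by
    intro t y
    simp only [f, q, toLp_prod_add_toLp_zero, norm_toLp_prod_sq]
    ring_nf
  have hmeas : Measurable ((crescent R q).indicator f) :=
    (by fun_prop : Measurable f).indicator (measurableSet_crescent R q)
  calc crescentIntegral R q = ∫⁻ u, (crescent R q).indicator f u :=
        (lintegral_indicator (measurableSet_crescent R q) f).symm
    _ = ∫⁻ z : ℝ × EuclideanSpace ℝ (Fin 2), (crescent R q).indicator f (toLp 2 z) :=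
        ((WithLp.volume_preserving_toLp ℝ _).lintegral_comp_emb
          (MeasurableEquiv.toLp 2 _).measurableEmbedding _).symm
    _ = ∫⁻ t, ∫⁻ y, (crescent R q).indicator f (toLp 2 (t, y)) := by
        rw [Measure.volume_eq_prod]
        exact lintegral_prod _ (hmeas.comp (MeasurableEquiv.toLp 2 _).measurable).aemeasurable
    _ ≤ ∫⁻ t, (Ioo (-R) R).indicator (fun _ ↦ ENNReal.ofReal π) t := by
        refine lintegral_mono fun t ↦ le_of_eq_of_le ?_ (mul_volume_crescent_slice_le R ρ t)
        have hslice : MeasurableSet ((fun y ↦ toLp 2 (t, y)) ⁻¹' crescent R q) :=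
          measurableSet_crescent R q |>.preimage
            ((MeasurableEquiv.toLp 2 _).measurable.comp measurable_prodMk_left)
        rw [← lintegral_indicator_const hslice]
        refine lintegral_congr fun y ↦ ?_
        by_cases hy : toLp 2 (t, y) ∈ crescent R q
        · rw [indicator_of_mem hy, indicator_of_mem (show y ∈ _ from hy), hf]
        · rw [indicator_of_notMem hy, indicator_of_notMem (show y ∉ _ from hy)]
    _ = ENNReal.ofReal (2 * π * R) := by
        rw [lintegral_indicator_const measurableSet_Ioo, volume_Ioo,
          ← ENNReal.ofReal_mul pi_pos.le]
        ring_nf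

section ThreeDim

variable {F : Type*} [NormedAddCommGroup F] [InnerProductSpace ℝ F] [FiniteDimensional ℝ F]
  [MeasurableSpace F] [BorelSpace F]

lemma crescentIntegral_le_two_pi_mul (hF : Module.finrank ℝ F = 3) (R : ℝ) (q : F) :
    crescentIntegral R q ≤ ENNReal.ofReal (2 * π * R) := by
  have hdim :
      Module.finrank ℝ F = Module.finrank ℝ (WithLp 2 (ℝ × EuclideanSpace ℝ (Fin 2))) := by
    rw [(WithLp.linearEquiv 2 ℝ _).finrank_eq, hF]
    simp
  rw [crescentIntegral_eq_of_norm_eq hdim R (q' := toLp 2 (‖q‖, 0)) (by simp)]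
  exact crescentIntegral_toLp_le R ‖q‖

lemma crescentIntegral_le_of_four_le_norm {R : ℝ} (hR : R ≤ 1) {q : F} (hq : 4 ≤ ‖q‖) :
    crescentIntegral R q ≤ ENNReal.ofReal (4 / (1 + ‖q‖) ^ 2) * volume (ball (0 : F) R) := by
  have hbound : ∀ u ∈ crescent R q,
      ENNReal.ofReal (1 / (‖u + q‖ ^ 2 - ‖u‖ ^ 2)) ≤ ENNReal.ofReal (4 / (1 + ‖q‖) ^ 2) := by
    intro u hu
    have hpos := norm_add_sq_sub_norm_sq_pos hu
    have htri : ‖q‖ ≤ ‖u + q‖ + ‖u‖ := by simpa using norm_sub_le (u + q) u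
    obtain ⟨h₁, h₂⟩ := hu
    refine ENNReal.ofReal_le_ofReal ?_
    rw [div_le_div_iff₀ hpos (by positivity)]
    nlinarith [norm_nonneg u]
  calc crescentIntegral R q
      ≤ ∫⁻ _ in crescent R q, ENNReal.ofReal (4 / (1 + ‖q‖) ^ 2) :=
        setLIntegral_mono measurable_const hbound
    _ = ENNReal.ofReal (4 / (1 + ‖q‖) ^ 2) * volume (crescent R q) := setLIntegral_const _ _
    _ ≤ _ := by
        gcongr
        intro u hu
        simpa using hu.1

/-- `50π` is `2π · 5²` from the bound `2πR` for `‖q‖ ≤ 4`; the large-`‖q‖` bound only needs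
`4 · 4π/3`. -/
lemma crescentIntegral_le (hF : Module.finrank ℝ F = 3) {R : ℝ} (hR : R ≤ 1) (q : F) :
    crescentIntegral R q ≤ ENNReal.ofReal (50 * π / (1 + ‖q‖) ^ 2) := by
  rcases le_total ‖q‖ 4 with hq | hq
  · refine (crescentIntegral_le_two_pi_mul hF R q).trans (ENNReal.ofReal_le_ofReal ?_)
    have hq' : (1 + ‖q‖) ^ 2 ≤ 25 := by nlinarith [norm_nonneg q]
    rw [le_div_iff₀ (by positivity)]
    nlinarith [mul_le_mul_of_nonneg_left hR (by positivity : 0 ≤ 2 * π * (1 + ‖q‖) ^ 2), pi_pos]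
  · have hball : volume (ball (0 : F) 1) = ENNReal.ofReal (4 * π / 3) := by
      rw [InnerProductSpace.volume_ball_of_dim_odd (k := 1) (by rw [hF]), hF]
      norm_num
      ring_nf
    calc crescentIntegral R q
        ≤ ENNReal.ofReal (4 / (1 + ‖q‖) ^ 2) * volume (ball (0 : F) 1) :=
          (crescentIntegral_le_of_four_le_norm hR hq).trans (by gcongr)
      _ ≤ ENNReal.ofReal (50 * π / (1 + ‖q‖) ^ 2) := by
          rw [hball, ← ENNReal.ofReal_mul (by positivity)]
          refine ENNReal.ofReal_le_ofReal ?_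
          rw [div_mul_eq_mul_div]
          exact div_le_div_of_nonneg_right (by nlinarith [pi_pos]) (by positivity)

lemma lintegral_div_one_add_norm_sq_sq_lt_top (hF : Module.finrank ℝ F = 3) {c : ℝ}
    (hc : 0 ≤ c) :
    ∫⁻ p : F, ENNReal.ofReal (c / (1 + ‖p‖) ^ 2) ^ 2 < ⊤ := by
  have hint : Integrable (fun p : F ↦ c ^ 2 * (1 + ‖p‖) ^ (-(4 : ℝ))) :=
    (integrable_one_add_norm (by rw [hF]; norm_num)).const_mul _
  refine lt_of_eq_of_lt (lintegral_congr fun p ↦ ?_) hint.lintegral_lt_top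
  rw [← ENNReal.ofReal_pow (by positivity), Real.rpow_neg (by positivity)]
  congr 1
  norm_cast
  field_simp

end ThreeDim

lemma belyakovI_two_le (x : ℝ) :
    belyakovI 2 x ≤ ∫⁻ p : E3, crescentIntegral 1 p * crescentIntegral x (-p) := by
  refine lintegral_mono fun p ↦ ?_
  have hsplit := setLIntegral_setLIntegral_inv_add_sq_le (μ := volume) (ν := volume)
    (f := fun r : E3 ↦ ‖r + p‖ ^ 2 - ‖r‖ ^ 2) (g := fun r' : E3 ↦ ‖r' + -p‖ ^ 2 - ‖r'‖ ^ 2)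
    (by fun_prop) (measurableSet_crescent 1 p) (measurableSet_crescent x (-p))
    (fun _ ↦ norm_add_sq_sub_norm_sq_pos) (fun _ ↦ norm_add_sq_sub_norm_sq_pos)
  simp only [crescent, sub_eq_add_neg, add_assoc] at hsplit ⊢
  exact hsplit

/-- `I₂(x) ≤ C` uniformly in `x ∈ (0,1]`. -/
theorem belyakovI_two_bound :
    ∃ C : ℝ, 0 < C ∧ ∀ x : ℝ, 0 < x → x ≤ 1 →
      belyakovI 2 x ≤ ENNReal.ofReal C := by
  have hE3 : Module.finrank ℝ E3 = 3 := finrank_euclideanSpace_fin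
  set M := ∫⁻ p : E3, ENNReal.ofReal (50 * π / (1 + ‖p‖) ^ 2) ^ 2
  have hM : M ≠ ⊤ := (lintegral_div_one_add_norm_sq_sq_lt_top hE3 (by positivity)).ne
  refine ⟨M.toReal + 1, by positivity, fun x _ hx₁ ↦ ?_⟩
  calc belyakovI 2 x ≤ ∫⁻ p : E3, crescentIntegral 1 p * crescentIntegral x (-p) :=
        belyakovI_two_le x
    _ ≤ M := lintegral_mono fun p ↦ by
        rw [sq]
        gcongr
        · exact crescentIntegral_le hE3 le_rfl p
        · simpa using crescentIntegral_le hE3 hx₁ (-p)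
    _ ≤ ENNReal.ofReal (M.toReal + 1) :=
        (ENNReal.le_ofReal_iff_toReal_le hM (by positivity)).2 (by linarith)
end

section
/- There exists an absolute constant C > 0 such that for all a, b > 0, all R ≥ 4a, and all ε ≥ 0, ∫_{|p|≥R} dp ∫_{|r|<a<|r+p|} dr ∫_{|r'|<b<|r'−p|} dr' (|r+p|² − |r|² + |r'−p|² − |r'|² + 2ε)^{−2} ≤ C a³ b³ / R. (On the domain, since |r| < a ≤ R/4 ≤ |p|/4, one has |r+p|² − |r|² ≥ |p|²/2, and |r'−p|² − |r'|² > 0.) -/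
/-!
On the domain, `|r| < a ≤ |p|/4` gives `|r + p|² - |r|² ≥ |p|²/2` and `|r'| < b < |r' - p|` makes
the second difference positive, so the integrand is at most `4 |p|⁻⁴`. The `r` and `r'` integrals
then contribute at most the volumes of the balls of radii `a` and `b`, and the substitution
`p = R q` turns `∫_{|p| ≥ R} |p|⁻⁴ dp` into `R⁻¹ ∫_{|q| ≥ 1} |q|⁻⁴ dq`, which is finite because
`4 > 3`.
-/

open MeasureTheory
open scoped ENNReal

open Metric Set Module

section

variable {E : Type*} [NormedAddCommGroup E] [NormedSpace ℝ E] [FiniteDimensional ℝ E]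
  [MeasurableSpace E] [BorelSpace E] (μ : Measure E) [μ.IsAddHaarMeasure]

theorem lintegral_comp_smul_of_pos (f : E → ℝ≥0∞) {R : ℝ} (hR : 0 < R) :
    ∫⁻ x, f (R • x) ∂μ = ENNReal.ofReal ((R ^ finrank ℝ E)⁻¹) * ∫⁻ x, f x ∂μ := by
  have h : ∫⁻ x, f x ∂Measure.map (R • ·) μ = ∫⁻ x, f (R • x) ∂μ :=
    lintegral_map_equiv f (Homeomorph.smulOfNeZero R hR.ne').toMeasurableEquiv
  rw [← h, Measure.map_addHaar_smul μ hR.ne', lintegral_smul_measure, abs_of_pos (by positivity),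
    smul_eq_mul]

theorem addHaar_ball_eq_ofReal (x : E) {ρ : ℝ} (hρ : 0 < ρ) :
    μ (ball x ρ) = ENNReal.ofReal (ρ ^ finrank ℝ E * μ.real (ball 0 1)) := by
  rw [μ.addHaar_ball_of_pos x hρ, ENNReal.ofReal_mul (by positivity), ofReal_measureReal]

theorem setLIntegral_norm_rpow_neg_tail {R : ℝ} (hR : 0 < R) (s : ℝ) :
    ∫⁻ x in {x : E | R ≤ ‖x‖}, ENNReal.ofReal (‖x‖ ^ (-s)) ∂μ
      = ENNReal.ofReal (R ^ ((finrank ℝ E : ℝ) - s)) *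
          ∫⁻ x in {x : E | 1 ≤ ‖x‖}, ENNReal.ofReal (‖x‖ ^ (-s)) ∂μ := by
  have hmeas (t : ℝ) : MeasurableSet {x : E | t ≤ ‖x‖} :=
    measurableSet_le measurable_const measurable_norm
  have hscale (x : E) :
      {x : E | R ≤ ‖x‖}.indicator (fun x ↦ ENNReal.ofReal (‖x‖ ^ (-s))) (R • x)
        = ENNReal.ofReal (R ^ (-s)) *
            {x : E | 1 ≤ ‖x‖}.indicator (fun x ↦ ENNReal.ofReal (‖x‖ ^ (-s))) x := by
    simp only [indicator, mem_ofPred_eq, norm_smul, Real.norm_of_nonneg hR.le,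
      le_mul_iff_one_le_right hR]
    split_ifs
    · rw [Real.mul_rpow hR.le (norm_nonneg x), ENNReal.ofReal_mul (by positivity)]
    · rw [mul_zero]
  have h := lintegral_comp_smul_of_pos μ
    ({x : E | R ≤ ‖x‖}.indicator (fun x ↦ ENNReal.ofReal (‖x‖ ^ (-s)))) hR
  rw [lintegral_indicator (hmeas R)] at h
  simp only [hscale] at h
  rw [lintegral_const_mul' _ _ ENNReal.ofReal_ne_top, lintegral_indicator (hmeas 1)] at h
  have hRd : (0 : ℝ) < R ^ finrank ℝ E := by positivity
  calc ∫⁻ x in {x : E | R ≤ ‖x‖}, ENNReal.ofReal (‖x‖ ^ (-s)) ∂μ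
      = ENNReal.ofReal (R ^ finrank ℝ E) * (ENNReal.ofReal ((R ^ finrank ℝ E)⁻¹) *
          ∫⁻ x in {x : E | R ≤ ‖x‖}, ENNReal.ofReal (‖x‖ ^ (-s)) ∂μ) := by
        rw [← mul_assoc, ← ENNReal.ofReal_mul hRd.le, mul_inv_cancel₀ hRd.ne', ENNReal.ofReal_one,
          one_mul]
    _ = ENNReal.ofReal (R ^ ((finrank ℝ E : ℝ) - s)) *
          ∫⁻ x in {x : E | 1 ≤ ‖x‖}, ENNReal.ofReal (‖x‖ ^ (-s)) ∂μ := by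
        rw [← h, ← mul_assoc, ← ENNReal.ofReal_mul hRd.le, Real.rpow_sub hR, Real.rpow_natCast,
          Real.rpow_neg hR.le, div_eq_mul_inv]

theorem setLIntegral_one_le_norm_rpow_neg_lt_top {s : ℝ} (hs : (finrank ℝ E : ℝ) < s) :
    ∫⁻ x in {x : E | 1 ≤ ‖x‖}, ENNReal.ofReal (‖x‖ ^ (-s)) ∂μ < ∞ := by
  have hs0 : 0 ≤ s := (Nat.cast_nonneg _).trans hs.le
  have hle (x : E) (hx : 1 ≤ ‖x‖) : ‖x‖ ^ (-s) ≤ 2 ^ s * (1 + ‖x‖) ^ (-s) := by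
    calc ‖x‖ ^ (-s) ≤ ((1 + ‖x‖) / 2) ^ (-s) :=
          Real.rpow_le_rpow_of_nonpos (by positivity) (by linarith) (by linarith)
      _ = 2 ^ s * (1 + ‖x‖) ^ (-s) := by
          rw [Real.div_rpow (by positivity) zero_le_two, Real.rpow_neg zero_le_two, div_inv_eq_mul,
            mul_comm]
  calc ∫⁻ x in {x : E | 1 ≤ ‖x‖}, ENNReal.ofReal (‖x‖ ^ (-s)) ∂μ
      ≤ ∫⁻ x in {x : E | 1 ≤ ‖x‖}, ENNReal.ofReal (2 ^ s) * ENNReal.ofReal ((1 + ‖x‖) ^ (-s)) ∂μ :=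
        setLIntegral_mono (by fun_prop) fun x hx ↦ by
          rw [← ENNReal.ofReal_mul (by positivity)]
          exact ENNReal.ofReal_le_ofReal (hle x hx)
    _ ≤ ∫⁻ x, ENNReal.ofReal (2 ^ s) * ENNReal.ofReal ((1 + ‖x‖) ^ (-s)) ∂μ :=
        setLIntegral_le_lintegral _ _
    _ < ∞ := by
        rw [lintegral_const_mul' _ _ ENNReal.ofReal_ne_top]
        exact ENNReal.mul_lt_top ENNReal.ofReal_lt_top (finite_integral_one_add_norm hs)

theorem exists_setLIntegral_norm_rpow_neg_le {s : ℝ} (hs : (finrank ℝ E : ℝ) < s) :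
    ∃ C : ℝ, 0 < C ∧ ∀ R : ℝ, 0 < R →
      ∫⁻ x in {x : E | R ≤ ‖x‖}, ENNReal.ofReal (‖x‖ ^ (-s)) ∂μ
        ≤ ENNReal.ofReal (C * R ^ ((finrank ℝ E : ℝ) - s)) := by
  set I := ∫⁻ x in {x : E | 1 ≤ ‖x‖}, ENNReal.ofReal (‖x‖ ^ (-s)) ∂μ
  have hI : I ≠ ∞ := (setLIntegral_one_le_norm_rpow_neg_lt_top μ hs).ne
  refine ⟨I.toReal + 1, by positivity, fun R hR ↦ ?_⟩
  rw [setLIntegral_norm_rpow_neg_tail μ hR, mul_comm _ (R ^ _), ENNReal.ofReal_mul (by positivity)]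
  gcongr
  exact (ENNReal.le_ofReal_iff_toReal_le hI (by positivity)).2 (by linarith)

end

theorem half_sq_norm_le_sq_norm_add_sub_sq_norm {E : Type*} [SeminormedAddCommGroup E] {r p : E}
    (h : 4 * ‖r‖ ≤ ‖p‖) : ‖p‖ ^ 2 / 2 ≤ ‖r + p‖ ^ 2 - ‖r‖ ^ 2 := by
  have htri : ‖p‖ - ‖r‖ ≤ ‖r + p‖ := by simpa [add_comm] using norm_sub_norm_le p (-r)
  nlinarith [norm_nonneg r]

theorem belyakov_integrand_le {E : Type*} [SeminormedAddCommGroup E] {r r' p : E} {ε : ℝ}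
    (hr : 4 * ‖r‖ < ‖p‖) (hr' : ‖r'‖ ≤ ‖r' - p‖) (hε : 0 ≤ ε) :
    1 / (‖r + p‖ ^ 2 - ‖r‖ ^ 2 + ‖r' - p‖ ^ 2 - ‖r'‖ ^ 2 + 2 * ε) ^ 2 ≤ 4 * ‖p‖ ^ (-4 : ℝ) := by
  have hp : 0 < ‖p‖ := (by positivity : 0 ≤ 4 * ‖r‖).trans_lt hr
  have hD : ‖p‖ ^ 2 / 2 ≤ ‖r + p‖ ^ 2 - ‖r‖ ^ 2 + ‖r' - p‖ ^ 2 - ‖r'‖ ^ 2 + 2 * ε := by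
    nlinarith [half_sq_norm_le_sq_norm_add_sub_sq_norm hr.le, norm_nonneg r']
  calc 1 / (‖r + p‖ ^ 2 - ‖r‖ ^ 2 + ‖r' - p‖ ^ 2 - ‖r'‖ ^ 2 + 2 * ε) ^ 2
      ≤ 1 / (‖p‖ ^ 2 / 2) ^ 2 := by gcongr
    _ = 4 * ‖p‖ ^ (-4 : ℝ) := by
        rw [Real.rpow_neg hp.le]
        norm_cast
        field_simp
        ring

theorem setLIntegral_le_mul_measure {α : Type*} [MeasurableSpace α] {μ : Measure α}
    {s t : Set α} {f : α → ℝ≥0∞} {c : ℝ≥0∞} (hst : s ⊆ t) (hf : ∀ x ∈ s, f x ≤ c) :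
    ∫⁻ x in s, f x ∂μ ≤ c * μ t :=
  calc ∫⁻ x in s, f x ∂μ ≤ ∫⁻ _ in s, c ∂μ := setLIntegral_mono measurable_const hf
    _ = c * μ s := setLIntegral_const s c
    _ ≤ c * μ t := by gcongr

theorem belyakov_inner_lintegral_le {E : Type*} [SeminormedAddCommGroup E] [MeasurableSpace E]
    (μ ν : Measure E) {a b ε : ℝ} {p : E} (hp : 4 * a ≤ ‖p‖) (hε : 0 ≤ ε) :
    (∫⁻ r in {r : E | ‖r‖ < a ∧ a < ‖r + p‖}, ∫⁻ r' in {r' : E | ‖r'‖ < b ∧ b < ‖r' - p‖},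
      ENNReal.ofReal (1 / (‖r + p‖ ^ 2 - ‖r‖ ^ 2 + ‖r' - p‖ ^ 2 - ‖r'‖ ^ 2 + 2 * ε) ^ 2) ∂ν ∂μ)
      ≤ ENNReal.ofReal (4 * ‖p‖ ^ (-4 : ℝ)) * ν (ball 0 b) * μ (ball 0 a) :=
  setLIntegral_le_mul_measure (fun r hr ↦ mem_ball_zero_iff.2 hr.1) fun r hr ↦
    setLIntegral_le_mul_measure (fun r' hr' ↦ mem_ball_zero_iff.2 hr'.1) fun r' hr' ↦
      ENNReal.ofReal_le_ofReal <| belyakov_integrand_le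
        (by linarith [hr.1]) (by linarith [hr'.1, hr'.2]) hε

/-- High-momentum tail estimate (error term `ℰ₁` in Lemma 5.5): for `a, b > 0`, `R ≥ 4a` and
`ε ≥ 0`, the regularized Belyakov integrand over `|p| ≥ R` is bounded by `C a³ b³ / R`. -/
theorem belyakov_tail_bound :
    ∃ C : ℝ, 0 < C ∧ ∀ (a b R ε : ℝ), 0 < a → 0 < b → 4 * a ≤ R → 0 ≤ ε →
      (∫⁻ p in {p : E3 | R ≤ ‖p‖}, ∫⁻ r in {r : E3 | ‖r‖ < a ∧ a < ‖r + p‖},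
        ∫⁻ r' in {r' : E3 | ‖r'‖ < b ∧ b < ‖r' - p‖},
          ENNReal.ofReal
            (1 / (‖r + p‖ ^ 2 - ‖r‖ ^ 2 + ‖r' - p‖ ^ 2 - ‖r'‖ ^ 2 + 2 * ε) ^ 2))
        ≤ ENNReal.ofReal (C * a ^ 3 * b ^ 3 / R) := by
  obtain ⟨K, hK, htail⟩ :=
    exists_setLIntegral_norm_rpow_neg_le (volume : Measure E3) (s := 4) (by simp; norm_num)
  have hV : 0 < volume.real (ball (0 : E3) 1) :=
    ENNReal.toReal_pos (measure_ball_pos _ _ one_pos).ne' measure_ball_lt_top.ne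
  refine ⟨4 * K * volume.real (ball (0 : E3) 1) ^ 2, by positivity, fun a b R ε ha hb haR hε ↦ ?_⟩
  have hR : 0 < R := by linarith
  calc _ ≤ ∫⁻ p in {p : E3 | R ≤ ‖p‖}, ENNReal.ofReal (4 * ‖p‖ ^ (-4 : ℝ)) *
          volume (ball (0 : E3) b) * volume (ball (0 : E3) a) :=
        setLIntegral_mono (by fun_prop) fun p hp ↦
          belyakov_inner_lintegral_le volume volume (haR.trans hp.out) hε
    _ = ENNReal.ofReal 4 * (∫⁻ p in {p : E3 | R ≤ ‖p‖}, ENNReal.ofReal (‖p‖ ^ (-4 : ℝ))) *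
          volume (ball (0 : E3) b) * volume (ball (0 : E3) a) := by
        simp_rw [ENNReal.ofReal_mul (zero_le_four : (0 : ℝ) ≤ 4)]
        rw [lintegral_mul_const' _ _ measure_ball_lt_top.ne,
          lintegral_mul_const' _ _ measure_ball_lt_top.ne,
          lintegral_const_mul' _ _ ENNReal.ofReal_ne_top]
    _ ≤ ENNReal.ofReal 4 * ENNReal.ofReal (K * R ^ ((finrank ℝ E3 : ℝ) - 4)) *
          volume (ball (0 : E3) b) * volume (ball (0 : E3) a) := by
        gcongr
        exact htail R hR
    _ = ENNReal.ofReal (4 * K * volume.real (ball (0 : E3) 1) ^ 2 * a ^ 3 * b ^ 3 / R) := by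
        rw [addHaar_ball_eq_ofReal volume 0 ha, addHaar_ball_eq_ofReal volume 0 hb,
          finrank_euclideanSpace_fin,
          ← ENNReal.ofReal_mul (by positivity), ← ENNReal.ofReal_mul (by positivity),
          ← ENNReal.ofReal_mul (by positivity)]
        congr 1
        rw [show ((3 : ℕ) : ℝ) - 4 = -1 by norm_num, Real.rpow_neg_one]
        field_simp
end

section
/- There exists an absolute constant C > 0 such that for all 0 < k₂ ≤ k₁ and all ε > 0, ∫_{ℝ³} dp ∫_{|r|<k₁<|r+p|} dr ∫_{|r'|<k₂<|r'−p|} dr' | (E + 2ε)^{−2} − E^{−2} | ≤ C ε k₁³ (k₁/k₂)³, where E = E(p,r,r') := |r+p|² − |r|² + |r'−p|² − |r'|² (which is strictly positive on the integration domain). -/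
/-!
Put `A = ‖r + p‖² - ‖r‖²` and `B = ‖r' - p‖² - ‖r'‖²`, both positive on the domain. Since
`(A + B)⁻² - (A + B + 2ε)⁻² ≤ 4ε (A + B)⁻³ ≤ 4ε A^(-3/2) B^(-3/2)`, the `r` and `r'` integrals
decouple into `4ε S_{k₁}(p) S_{k₂}(-p)`, where `S_k(p) = ∫_{‖r‖ < k < ‖r + p‖} A^(-3/2) dr`.

Rotate `p` to `(P, 0) ∈ ℝ × ℝ²`. Then `A = P² + 2Pt` depends only on the first coordinate `t`
of `r`, and the slice of the domain at height `t` is a planar annulus of area at most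
`π (P² + 2Pt)`, so `S_k(p) ≤ π ∫_{t < k} (P² + 2Pt)^(-1/2) dt = π √(P (P + 2k)) / P`, and the
product is `O(k₁ / P)` for `P ≤ 3k₁`. For `P ≥ 3k` we have `A ≥ P² / 3` on a domain inside the
ball of radius `k`, so `S_k(p) = O(k³ / P³)` and the product is `O(k₁³ k₂³ / P⁶)` for
`P > 3k₁`. Both bounds integrate over their regions to `O(k₁³)`.
-/

open MeasureTheory
open scoped ENNReal

open Metric Set Real Module

lemma lintegral_Iic_ofReal_inv_sqrt_le {M : ℝ} (hM : 0 ≤ M) :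
    ∫⁻ x in Iic M, ENNReal.ofReal (√x)⁻¹ ≤ ENNReal.ofReal (2 * √M) := by
  -- `√x = 0` and `0⁻¹ = 0` for `x ≤ 0`, so only `(0, M]` contributes.
  have hzero : ∫⁻ x in Iic (0 : ℝ), ENNReal.ofReal (√x)⁻¹ = 0 := by
    rw [setLIntegral_congr_fun measurableSet_Iic fun x hx ↦ by
      rw [Real.sqrt_eq_zero'.2 hx, inv_zero, ENNReal.ofReal_zero]]
    exact lintegral_zero
  have hint : IntegrableOn (fun x : ℝ ↦ (√x)⁻¹) (Ioc 0 M) := by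
    refine ((intervalIntegrable_iff_integrableOn_Ioc_of_le hM).1
      (intervalIntegral.intervalIntegrable_rpow' (r := -(1 / 2)) (by norm_num))).congr_fun
      (fun x hx ↦ ?_) measurableSet_Ioc
    simp only [Real.sqrt_eq_rpow, Real.rpow_neg hx.1.le]
  calc ∫⁻ x in Iic M, ENNReal.ofReal (√x)⁻¹
      ≤ ∫⁻ x in Iic 0 ∪ Ioc 0 M, ENNReal.ofReal (√x)⁻¹ :=
        lintegral_mono_set fun x hx ↦ (le_or_gt x 0).imp id fun h ↦ ⟨h, hx⟩
    _ ≤ ∫⁻ x in Ioc 0 M, ENNReal.ofReal (√x)⁻¹ := by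
        refine (lintegral_union_le _ _ _).trans ?_
        rw [hzero, zero_add]
    _ = ENNReal.ofReal (2 * √M) := by
        rw [← ofReal_integral_eq_lintegral_ofReal hint (ae_of_all _ fun x ↦ by positivity),
          ← intervalIntegral.integral_of_le hM]
        congr 1
        rw [intervalIntegral.integral_congr (g := fun x ↦ x ^ (-(1 / 2) : ℝ)) fun x hx ↦ ?_,
          integral_rpow (Or.inl (by norm_num)), Real.zero_rpow (by norm_num), Real.sqrt_eq_rpow]
        · norm_num; ring
        · simp only [Real.sqrt_eq_rpow, Real.rpow_neg (show 0 ≤ x by simp_all)]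

lemma lintegral_Iic_ofReal_inv_sqrt_mul_add_le {a : ℝ} (ha : 0 < a) {b c : ℝ}
    (hM : 0 ≤ a * b + c) :
    ∫⁻ t in Iic b, ENNReal.ofReal (√(a * t + c))⁻¹
      ≤ ENNReal.ofReal (2 * √(a * b + c) / a) := by
  have himage : (fun t ↦ a * t + c) '' Iic b = Iic (a * b + c) := by
    ext y
    refine ⟨fun ⟨t, ht, hy⟩ ↦ hy ▸ by simp only [mem_Iic] at ht ⊢; nlinarith,
      fun hy ↦ ⟨(y - c) / a, ?_, ?_⟩⟩
    · rw [mem_Iic, div_le_iff₀ ha]; linarith [mem_Iic.1 hy]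
    · field_simp; ring
  have hsubst := lintegral_image_eq_lintegral_abs_deriv_mul (s := Iic b)
    (f := fun t ↦ a * t + c) (f' := fun _ ↦ a) measurableSet_Iic
    (fun t _ ↦ (by simpa using ((hasDerivAt_id t).const_mul a).add_const c :
      HasDerivAt (fun t ↦ a * t + c) a t).hasDerivWithinAt)
    (fun s _ t _ h ↦ by simpa [ha.ne'] using h) fun x ↦ ENNReal.ofReal (√x)⁻¹
  rw [himage, lintegral_const_mul _ (by fun_prop)] at hsubst
  rw [ENNReal.ofReal_div_of_pos ha, ENNReal.le_div_iff_mul_le (by simp [ha]) (by simp), mul_comm]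
  simpa [abs_of_pos ha, hsubst] using lintegral_Iic_ofReal_inv_sqrt_le hM

lemma ofReal_sqrt_sq (x : ℝ) : ENNReal.ofReal √x ^ 2 = ENNReal.ofReal x := by
  rw [← ENNReal.ofReal_pow (Real.sqrt_nonneg _), Real.sq_sqrt', ENNReal.ofReal_max]
  simp

lemma volume_sq_norm_mem_Ioo_le (c d : ℝ) :
    volume {y : EuclideanSpace ℝ (Fin 2) | c < ‖y‖ ^ 2 ∧ ‖y‖ ^ 2 < d}
      ≤ ENNReal.ofReal (π * (d - c)) := by
  rcases le_or_gt d c with hdc | hcd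
  · have : {y : EuclideanSpace ℝ (Fin 2) | c < ‖y‖ ^ 2 ∧ ‖y‖ ^ 2 < d} = ∅ :=
      eq_empty_of_forall_notMem fun y hy ↦ by linarith [hy.1, hy.2]
    simp [this]
  have hsub : {y : EuclideanSpace ℝ (Fin 2) | c < ‖y‖ ^ 2 ∧ ‖y‖ ^ 2 < d}
      ⊆ ball 0 √d \ ball 0 √c := fun y hy ↦ by
    simp only [mem_sdiff, mem_ball_zero_iff, Real.lt_sqrt (norm_nonneg y)]
    exact ⟨hy.2, hy.1.not_gt⟩
  calc _ ≤ volume (ball (0 : EuclideanSpace ℝ (Fin 2)) √d \ ball 0 √c) := measure_mono hsub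
    _ = (ENNReal.ofReal d - ENNReal.ofReal c) * ENNReal.ofReal π := by
        rw [measure_sdiff (ball_subset_ball (Real.sqrt_le_sqrt hcd.le))
          measurableSet_ball.nullMeasurableSet measure_ball_lt_top.ne,
          EuclideanSpace.volume_ball_fin_two, EuclideanSpace.volume_ball_fin_two,
          ofReal_sqrt_sq, ofReal_sqrt_sq, ENNReal.sub_mul fun _ _ ↦ ENNReal.ofReal_ne_top]
    _ ≤ ENNReal.ofReal (d - c) * ENNReal.ofReal π := by
        gcongr
        rw [tsub_le_iff_right]
        exact (ENNReal.ofReal_add_le).trans_eq' (by rw [sub_add_cancel])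
    _ = ENNReal.ofReal (π * (d - c)) := by
        rw [← ENNReal.ofReal_mul (by linarith), mul_comm]

lemma lintegral_ofReal_comp_norm {E : Type*} [NormedAddCommGroup E] [NormedSpace ℝ E]
    [FiniteDimensional ℝ E] [MeasurableSpace E] [BorelSpace E] [Nontrivial E]
    (μ : Measure E) [μ.IsAddHaarMeasure] {f : ℝ → ℝ} (hf : ∀ y, 0 ≤ f y)
    (hint : IntegrableOn (fun y ↦ y ^ (finrank ℝ E - 1) * f y) (Ioi 0)) :
    ∫⁻ x, ENNReal.ofReal (f ‖x‖) ∂μ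
      = ENNReal.ofReal
          (finrank ℝ E * μ.real (ball 0 1) * ∫ y in Ioi 0, y ^ (finrank ℝ E - 1) * f y) := by
  rw [← ofReal_integral_eq_lintegral_ofReal ((integrable_fun_norm_addHaar μ).2 hint)
    (ae_of_all _ fun x ↦ hf _), integral_fun_norm_addHaar μ f]
  simp [nsmul_eq_mul, mul_assoc]

section FinrankThree
variable {E : Type*} [NormedAddCommGroup E] [InnerProductSpace ℝ E] [FiniteDimensional ℝ E]
  [MeasurableSpace E] [BorelSpace E]

lemma volume_ball_of_finrank_eq_three (hE : finrank ℝ E = 3) (x : E) {r : ℝ} (hr : 0 ≤ r) :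
    volume (ball x r) = ENNReal.ofReal (4 * π / 3 * r ^ 3) := by
  rw [InnerProductSpace.volume_ball_of_dim_odd (k := 1) hE, hE, ← ENNReal.ofReal_pow hr,
    ← ENNReal.ofReal_mul (by positivity)]
  norm_num [Nat.doubleFactorial]
  ring_nf

lemma volume_real_ball_of_finrank_eq_three (hE : finrank ℝ E = 3) :
    volume.real (ball (0 : E) 1) = 4 * π / 3 := by
  rw [measureReal_def, volume_ball_of_finrank_eq_three hE 0 zero_le_one,
    ENNReal.toReal_ofReal (by positivity)]
  ring

lemma lintegral_closedBall_inv_norm (hE : finrank ℝ E = 3) {R : ℝ} (hR : 0 ≤ R) :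
    ∫⁻ p in closedBall (0 : E) R, ENNReal.ofReal ‖p‖⁻¹
      = ENNReal.ofReal (2 * π * R ^ 2) := by
  have : Nontrivial E := Module.nontrivial_of_finrank_pos (R := ℝ) (by omega)
  set f := (Icc 0 R).indicator fun y : ℝ ↦ y⁻¹
  have hf : ∀ y, 0 ≤ f y := fun y ↦ by
    by_cases hy : y ∈ Icc 0 R
    · simp [f, hy, hy.1]
    · simp [f, hy]
  have hpoly : EqOn (fun y ↦ y ^ (finrank ℝ E - 1) * f y)
      ((Ioc 0 R).indicator fun y ↦ y) (Ioi 0) := by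
    intro y (hy : 0 < y)
    by_cases hyR : y ≤ R
    · simp [f, hyR, hy.le, hE, show y ∈ Ioc 0 R from ⟨hy, hyR⟩]
      field_simp
    · simp [f, hyR, show y ∉ Ioc 0 R from fun h ↦ hyR h.2]
  have hint : IntegrableOn (fun y ↦ y ^ (finrank ℝ E - 1) * f y) (Ioi 0) :=
    ((integrable_indicator_iff measurableSet_Ioc).2
      (continuous_id.integrableOn_Icc.mono_set Ioc_subset_Icc_self)).integrableOn.congr_fun
      hpoly.symm measurableSet_Ioi
  have hval : ∫ y in Ioi 0, y ^ (finrank ℝ E - 1) * f y = R ^ 2 / 2 := by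
    rw [setIntegral_congr_fun measurableSet_Ioi hpoly, integral_indicator measurableSet_Ioc,
      Measure.restrict_restrict measurableSet_Ioc, Ioc_inter_Ioi, sup_of_le_left le_rfl,
      ← intervalIntegral.integral_of_le hR, integral_id]
    ring
  calc ∫⁻ p in closedBall (0 : E) R, ENNReal.ofReal ‖p‖⁻¹
      = ∫⁻ p, ENNReal.ofReal (f ‖p‖) := by
        rw [← lintegral_indicator measurableSet_closedBall]
        congr 1 with p
        by_cases hp : ‖p‖ ≤ R <;> simp [f, hp]
    _ = ENNReal.ofReal (2 * π * R ^ 2) := by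
        rw [lintegral_ofReal_comp_norm volume hf hint, hval,
          volume_real_ball_of_finrank_eq_three hE, hE]
        congr 1; push_cast; ring

lemma lintegral_compl_closedBall_inv_norm_pow_six (hE : finrank ℝ E = 3) {R : ℝ} (hR : 0 < R) :
    ∫⁻ p in (closedBall (0 : E) R)ᶜ, ENNReal.ofReal (‖p‖ ^ 6)⁻¹
      = ENNReal.ofReal (4 * π / (3 * R ^ 3)) := by
  have : Nontrivial E := Module.nontrivial_of_finrank_pos (R := ℝ) (by omega)
  set f := (Ioi R).indicator fun y : ℝ ↦ (y ^ 6)⁻¹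
  have hf : ∀ y, 0 ≤ f y := fun y ↦ by
    by_cases hy : y ∈ Ioi R
    · have : 0 < y := hR.trans hy
      simp only [f, indicator_of_mem hy]; positivity
    · simp [f, hy]
  have hpoly : EqOn (fun y ↦ y ^ (finrank ℝ E - 1) * f y)
      ((Ioi R).indicator fun y ↦ y ^ (-4 : ℝ)) (Ioi 0) := by
    intro y (hy : 0 < y)
    by_cases hyR : y ∈ Ioi R
    · simp only [f, indicator_of_mem hyR, hE, Real.rpow_neg hy.le]
      norm_num
      field_simp
    · simp [f, hyR]
  have hint : IntegrableOn (fun y ↦ y ^ (finrank ℝ E - 1) * f y) (Ioi 0) :=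
    ((integrable_indicator_iff measurableSet_Ioi).2
      (integrableOn_Ioi_rpow_of_lt (by norm_num) hR)).integrableOn.congr_fun
      hpoly.symm measurableSet_Ioi
  have hval : ∫ y in Ioi 0, y ^ (finrank ℝ E - 1) * f y = (R ^ 3)⁻¹ / 3 := by
    rw [setIntegral_congr_fun measurableSet_Ioi hpoly, integral_indicator measurableSet_Ioi,
      Measure.restrict_restrict measurableSet_Ioi, Ioi_inter_Ioi, sup_of_le_left hR.le,
      integral_Ioi_rpow_of_lt (by norm_num) hR]
    norm_num [Real.rpow_neg hR.le]
  calc ∫⁻ p in (closedBall (0 : E) R)ᶜ, ENNReal.ofReal (‖p‖ ^ 6)⁻¹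
      = ∫⁻ p, ENNReal.ofReal (f ‖p‖) := by
        rw [← lintegral_indicator measurableSet_closedBall.compl]
        congr 1 with p
        by_cases hp : R < ‖p‖ <;> simp [f, hp]
    _ = ENNReal.ofReal (4 * π / (3 * R ^ 3)) := by
        rw [lintegral_ofReal_comp_norm volume hf hint, hval,
          volume_real_ball_of_finrank_eq_three hE, hE]
        congr 1; push_cast; field_simp

end FinrankThree

lemma exists_linearIsometryEquiv_apply_eq {E F : Type*} [NormedAddCommGroup E]
    [InnerProductSpace ℝ E] [FiniteDimensional ℝ E] [NormedAddCommGroup F]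
    [InnerProductSpace ℝ F] [FiniteDimensional ℝ F]
    (h : finrank ℝ E = finrank ℝ F) {v : E} {w : F} (hvw : ‖v‖ = ‖w‖) :
    ∃ T : E ≃ₗᵢ[ℝ] F, T v = w := by
  let T₀ : E ≃ₗᵢ[ℝ] F :=
    ((stdOrthonormalBasis ℝ E).reindex (finCongr h)).repr.trans
      (stdOrthonormalBasis ℝ F).repr.symm
  exact ⟨T₀.trans (ℝ ∙ (T₀ v - w))ᗮ.reflection,
    Submodule.reflection_sub (by rw [LinearIsometryEquiv.norm_map, hvw])⟩

namespace Belyakov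

/-- `s ^ (-3/2)` for `s > 0`; it vanishes for `s ≤ 0`. -/
noncomputable def invPowThreeHalves (s : ℝ) : ℝ := (s * √s)⁻¹

lemma invPowThreeHalves_nonneg (s : ℝ) : 0 ≤ invPowThreeHalves s := by
  refine inv_nonneg.2 ?_
  rcases le_total 0 s with hs | hs
  · positivity
  · simp [Real.sqrt_eq_zero'.2 hs]

lemma one_div_sq_sub_one_div_add_sq_le {x ε : ℝ} (hx : 0 < x) (hε : 0 ≤ ε) :
    1 / x ^ 2 - 1 / (x + 2 * ε) ^ 2 ≤ 4 * ε / x ^ 3 := by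
  rw [div_sub_div _ _ (by positivity) (by positivity),
    div_le_div_iff₀ (by positivity) (by positivity)]
  have : 0 ≤ ε * x ^ 2 * (3 * ε * x + 4 * ε ^ 2) := by positivity
  linarith

lemma abs_one_div_add_sq_sub_one_div_sq_le {A B ε : ℝ} (hA : 0 < A) (hB : 0 < B)
    (hε : 0 ≤ ε) :
    |1 / (A + B + 2 * ε) ^ 2 - 1 / (A + B) ^ 2|
      ≤ 4 * ε * invPowThreeHalves A * invPowThreeHalves B := by
  have hAB : 0 < A + B := by positivity
  have hsqrt : √A * √B ≤ A + B := by
    nlinarith [sq_nonneg (√A - √B), Real.sq_sqrt hA.le, Real.sq_sqrt hB.le]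
  have hcube : A * √A * (B * √B) ≤ (A + B) ^ 3 := by
    calc A * √A * (B * √B) = (√A * √B) ^ 3 := by
          nth_rw 1 [← Real.sq_sqrt hA.le, ← Real.sq_sqrt hB.le]
          ring
      _ ≤ (A + B) ^ 3 := by gcongr
  rw [abs_sub_comm, abs_of_nonneg (sub_nonneg.2 (one_div_le_one_div_of_le (by positivity)
    (pow_le_pow_left₀ hAB.le (by linarith) 2)))]
  calc _ ≤ 4 * ε / (A + B) ^ 3 := one_div_sq_sub_one_div_add_sq_le hAB hε
    _ ≤ 4 * ε / (A * √A * (B * √B)) := by gcongr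
    _ = _ := by simp only [invPowThreeHalves]; field_simp

@[fun_prop]
lemma measurable_invPowThreeHalves : Measurable invPowThreeHalves := by
  unfold invPowThreeHalves; fun_prop

lemma invPowThreeHalves_anti {s t : ℝ} (hs : 0 < s) (hst : s ≤ t) :
    invPowThreeHalves t ≤ invPowThreeHalves s :=
  inv_anti₀ (mul_pos hs (Real.sqrt_pos.2 hs))
    (mul_le_mul hst (Real.sqrt_le_sqrt hst) (Real.sqrt_nonneg _) (hs.le.trans hst))

lemma invPowThreeHalves_sq_div_three_le {P : ℝ} (hP : 0 < P) :
    invPowThreeHalves (P ^ 2 / 3) ≤ 6 / P ^ 3 := by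
  have hsqrt : P / 2 ≤ √(P ^ 2 / 3) :=
    Real.le_sqrt_of_sq_le (by nlinarith)
  unfold invPowThreeHalves
  calc (P ^ 2 / 3 * √(P ^ 2 / 3))⁻¹ ≤ (P ^ 2 / 3 * (P / 2))⁻¹ := by gcongr
    _ = 6 / P ^ 3 := by field_simp; ring

lemma ofReal_invPowThreeHalves_mul_ofReal (s : ℝ) :
    ENNReal.ofReal (invPowThreeHalves s) * ENNReal.ofReal (π * s)
      = ENNReal.ofReal (π * (√s)⁻¹) := by
  rcases le_or_gt s 0 with hs | hs
  · simp [Real.sqrt_eq_zero'.2 hs,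
      ENNReal.ofReal_of_nonpos (mul_nonpos_of_nonneg_of_nonpos pi_pos.le hs)]
  · rw [invPowThreeHalves, ← ENNReal.ofReal_mul (inv_nonneg.2 (by positivity))]
    congr 1
    field_simp

section Shell

variable {E : Type*} [NormedAddCommGroup E]

lemma sq_norm_sub_sq_norm_pos {k : ℝ} {r p : E} (hr : ‖r‖ < k ∧ k < ‖r + p‖) :
    0 < ‖r + p‖ ^ 2 - ‖r‖ ^ 2 := by
  have := norm_nonneg r
  nlinarith [hr.1, hr.2]

def shell (k : ℝ) (p : E) : Set E := {r : E | ‖r‖ < k ∧ k < ‖r + p‖}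

lemma shell_zero (k : ℝ) : shell k (0 : E) = ∅ :=
  eq_empty_of_forall_notMem fun r hr ↦ by simp only [shell, add_zero] at hr; linarith [hr.1, hr.2]

variable [MeasureSpace E]

noncomputable def shellIntegral (k : ℝ) (p : E) : ℝ≥0∞ :=
  ∫⁻ r in shell k p, ENNReal.ofReal (invPowThreeHalves (‖r + p‖ ^ 2 - ‖r‖ ^ 2))

lemma shellIntegral_zero (k : ℝ) : shellIntegral k (0 : E) = 0 := by
  rw [shellIntegral, shell_zero, Measure.restrict_empty, lintegral_zero_measure]

variable [OpensMeasurableSpace E]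

lemma measurableSet_shell (k : ℝ) (p : E) : MeasurableSet (shell k p) :=
  (measurableSet_lt measurable_norm measurable_const).inter
    (measurableSet_lt measurable_const (continuous_norm.comp (continuous_add_const p)).measurable)

lemma lintegral_regularization_error_le {ε : ℝ} (hε : 0 ≤ ε) (k₁ k₂ : ℝ) (p : E) :
    ∫⁻ r in {r : E | ‖r‖ < k₁ ∧ k₁ < ‖r + p‖},
      ∫⁻ r' in {r' : E | ‖r'‖ < k₂ ∧ k₂ < ‖r' - p‖},
        ENNReal.ofReal
          |1 / (‖r + p‖ ^ 2 - ‖r‖ ^ 2 + ‖r' - p‖ ^ 2 - ‖r'‖ ^ 2 + 2 * ε) ^ 2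
            - 1 / (‖r + p‖ ^ 2 - ‖r‖ ^ 2 + ‖r' - p‖ ^ 2 - ‖r'‖ ^ 2) ^ 2|
      ≤ ENNReal.ofReal (4 * ε) * shellIntegral k₁ p * shellIntegral k₂ (-p) := by
  simp only [sub_eq_add_neg _ p]
  calc _ ≤ ∫⁻ r in {r : E | ‖r‖ < k₁ ∧ k₁ < ‖r + p‖},
        ∫⁻ r' in {r' : E | ‖r'‖ < k₂ ∧ k₂ < ‖r' + -p‖}, ENNReal.ofReal (4 * ε)
          * (ENNReal.ofReal (invPowThreeHalves (‖r + p‖ ^ 2 - ‖r‖ ^ 2))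
            * ENNReal.ofReal (invPowThreeHalves (‖r' + -p‖ ^ 2 - ‖r'‖ ^ 2))) := by
        refine setLIntegral_mono' (measurableSet_shell _ _) fun r hr ↦
          setLIntegral_mono' (measurableSet_shell _ _) fun r' hr' ↦ ?_
        rw [← ENNReal.ofReal_mul (invPowThreeHalves_nonneg _),
          ← ENNReal.ofReal_mul (by positivity)]
        refine ENNReal.ofReal_le_ofReal ?_
        rw [show ‖r + p‖ ^ 2 - ‖r‖ ^ 2 + ‖r' + -p‖ ^ 2 - ‖r'‖ ^ 2
              = (‖r + p‖ ^ 2 - ‖r‖ ^ 2) + (‖r' + -p‖ ^ 2 - ‖r'‖ ^ 2) by ring,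
          ← mul_assoc]
        exact abs_one_div_add_sq_sub_one_div_sq_le (sq_norm_sub_sq_norm_pos hr)
          (sq_norm_sub_sq_norm_pos hr') hε
    _ = ENNReal.ofReal (4 * ε) * shellIntegral k₁ p * shellIntegral k₂ (-p) := by
        simp_rw [lintegral_const_mul' _ _ ENNReal.ofReal_ne_top]
        rw [lintegral_mul_const _ (by fun_prop), mul_assoc]
        rfl

lemma shellIntegral_le_of_three_mul_le_norm {k : ℝ} {p : E} (hp : 3 * k ≤ ‖p‖)
    (hk : 0 < k) :
    shellIntegral k p ≤ ENNReal.ofReal (6 / ‖p‖ ^ 3) * volume (ball (0 : E) k) := by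
  have hP : 0 < ‖p‖ := by linarith
  calc shellIntegral k p ≤ ∫⁻ _ in shell k p, ENNReal.ofReal (6 / ‖p‖ ^ 3) := by
        refine setLIntegral_mono' (measurableSet_shell _ _) fun r hr ↦ ENNReal.ofReal_le_ofReal ?_
        have hrp : ‖p‖ ≤ ‖r + p‖ + ‖r‖ := by
          simpa using norm_sub_le (r + p) r
        have hlow : ‖p‖ ^ 2 / 3 ≤ ‖r + p‖ ^ 2 - ‖r‖ ^ 2 := by
          nlinarith [norm_nonneg r, hr.1]
        exact (invPowThreeHalves_anti (by positivity) hlow).trans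
          (invPowThreeHalves_sq_div_three_le hP)
    _ ≤ ENNReal.ofReal (6 / ‖p‖ ^ 3) * volume (ball (0 : E) k) := by
        rw [setLIntegral_const]
        gcongr
        intro r hr
        simpa using hr.1

noncomputable def shellKernel (k : ℝ) (p : E) : E → ℝ≥0∞ :=
  (shell k p).indicator fun r ↦ ENNReal.ofReal (invPowThreeHalves (‖r + p‖ ^ 2 - ‖r‖ ^ 2))

lemma measurable_shellKernel (k : ℝ) (p : E) : Measurable (shellKernel k p) :=
  Measurable.indicator (by fun_prop) (measurableSet_shell k p)

lemma shellIntegral_eq_lintegral_shellKernel (k : ℝ) (p : E) :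
    shellIntegral k p = ∫⁻ r, shellKernel k p r :=
  (lintegral_indicator (measurableSet_shell k p) _).symm

end Shell

section InnerProductSpace

variable {E F : Type*} [NormedAddCommGroup E] [InnerProductSpace ℝ E] [FiniteDimensional ℝ E]
  [MeasurableSpace E] [BorelSpace E] [NormedAddCommGroup F] [InnerProductSpace ℝ F]
  [FiniteDimensional ℝ F] [MeasurableSpace F] [BorelSpace F]

lemma shellIntegral_map_linearIsometryEquiv (T : E ≃ₗᵢ[ℝ] F) (k : ℝ) (p : E) :
    shellIntegral k (T p) = shellIntegral k p := by
  have hpre : T ⁻¹' shell k (T p) = shell k p := by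
    ext r; simp [shell, ← map_add]
  rw [shellIntegral, shellIntegral, ← hpre,
    ← T.measurePreserving.setLIntegral_comp_preimage_emb T.toMeasurableEquiv.measurableEmbedding]
  simp [← map_add]

-- Euclidean `ℝ³` split orthogonally as `ℝ × ℝ²`, with `p` rotated onto the first factor.
local notation "ℝ×ℝ²" => WithLp 2 (ℝ × EuclideanSpace ℝ (Fin 2))

lemma mem_shell_toLp_iff {k P t : ℝ} (hk : 0 < k) (y : EuclideanSpace ℝ (Fin 2)) :
    (WithLp.toLp 2 (t, y) : ℝ×ℝ²) ∈ shell k (WithLp.toLp 2 (P, 0) : ℝ×ℝ²)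
      ↔ t ^ 2 + ‖y‖ ^ 2 < k ^ 2 ∧ k ^ 2 < (t + P) ^ 2 + ‖y‖ ^ 2 := by
  rw [shell, mem_ofPred_eq, ← WithLp.toLp_add, Prod.mk_add_mk, add_zero,
    ← sq_lt_sq₀ (norm_nonneg _) hk.le, ← sq_lt_sq₀ hk.le (norm_nonneg _),
    WithLp.prod_norm_sq_eq_of_L2, WithLp.prod_norm_sq_eq_of_L2]
  simp

lemma shellKernel_toLp_le {k P t : ℝ} (hk : 0 < k) (y : EuclideanSpace ℝ (Fin 2)) :
    shellKernel k (WithLp.toLp 2 (P, 0) : ℝ×ℝ²) (WithLp.toLp 2 (t, y))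
      ≤ {y : EuclideanSpace ℝ (Fin 2) |
          k ^ 2 - (t + P) ^ 2 < ‖y‖ ^ 2 ∧ ‖y‖ ^ 2 < k ^ 2 - t ^ 2}.indicator
        (fun _ ↦ ENNReal.ofReal (invPowThreeHalves (2 * P * t + P ^ 2))) y := by
  by_cases hy : (WithLp.toLp 2 (t, y) : ℝ×ℝ²) ∈ shell k (WithLp.toLp 2 (P, 0) : ℝ×ℝ²)
  · have hy' := (mem_shell_toLp_iff hk y).1 hy
    rw [shellKernel, indicator_of_mem hy,
      indicator_of_mem (show y ∈ {y : EuclideanSpace ℝ (Fin 2) |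
        k ^ 2 - (t + P) ^ 2 < ‖y‖ ^ 2 ∧ ‖y‖ ^ 2 < k ^ 2 - t ^ 2}
          from ⟨by linarith, by linarith⟩),
      ← WithLp.toLp_add, Prod.mk_add_mk, add_zero, WithLp.prod_norm_sq_eq_of_L2,
      WithLp.prod_norm_sq_eq_of_L2]
    simp only [WithLp.toLp_fst, WithLp.toLp_snd, Real.norm_eq_abs, sq_abs]
    exact le_of_eq (by congr 2; ring)
  · rw [shellKernel, indicator_of_notMem hy]
    exact zero_le

lemma lintegral_shellKernel_toLp_le {k P : ℝ} (hk : 0 < k) (t : ℝ) :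
    ∫⁻ y, shellKernel k (WithLp.toLp 2 (P, 0) : ℝ×ℝ²) (WithLp.toLp 2 (t, y))
      ≤ (Iio k).indicator
        (fun t ↦ ENNReal.ofReal π * ENNReal.ofReal (√(2 * P * t + P ^ 2))⁻¹) t := by
  by_cases ht : t < k
  swap
  · have hzero (y) :
        shellKernel k (WithLp.toLp 2 (P, 0) : ℝ×ℝ²) (WithLp.toLp 2 (t, y)) = 0 :=
      indicator_of_notMem (fun h ↦ ht <| by
        nlinarith [((mem_shell_toLp_iff hk y).1 h).1, norm_nonneg y]) _
    simp [hzero]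
  rw [indicator_of_mem (mem_Iio.2 ht)]
  have hsq : Measurable fun y : EuclideanSpace ℝ (Fin 2) ↦ ‖y‖ ^ 2 := by fun_prop
  calc _ ≤ _ := lintegral_mono fun y ↦ shellKernel_toLp_le hk y
    _ = _ := lintegral_indicator_const
        ((measurableSet_lt measurable_const hsq).inter (measurableSet_lt hsq measurable_const)) _
    _ ≤ ENNReal.ofReal (invPowThreeHalves (2 * P * t + P ^ 2))
          * ENNReal.ofReal (π * ((k ^ 2 - t ^ 2) - (k ^ 2 - (t + P) ^ 2))) := by
        gcongr
        exact volume_sq_norm_mem_Ioo_le _ _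
    _ = ENNReal.ofReal π * ENNReal.ofReal (√(2 * P * t + P ^ 2))⁻¹ := by
        rw [show (k ^ 2 - t ^ 2) - (k ^ 2 - (t + P) ^ 2) = 2 * P * t + P ^ 2 by ring,
          ofReal_invPowThreeHalves_mul_ofReal, ENNReal.ofReal_mul pi_pos.le]

lemma shellIntegral_toLp_le {k P : ℝ} (hk : 0 < k) (hP : 0 < P) :
    shellIntegral k (WithLp.toLp 2 (P, 0) : ℝ×ℝ²)
      ≤ ENNReal.ofReal (π * √(P * (P + 2 * k)) / P) := by
  calc shellIntegral k (WithLp.toLp 2 (P, 0) : ℝ×ℝ²)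
      = ∫⁻ t, ∫⁻ y, shellKernel k (WithLp.toLp 2 (P, 0) : ℝ×ℝ²) (WithLp.toLp 2 (t, y)) := by
        rw [shellIntegral_eq_lintegral_shellKernel,
          ← (WithLp.volume_preserving_toLp ℝ _).lintegral_comp_emb
            (MeasurableEquiv.toLp 2 _).measurableEmbedding, Measure.volume_eq_prod,
          lintegral_prod (fun z ↦ shellKernel k _ (WithLp.toLp 2 z))
            ((measurable_shellKernel _ _).comp (by fun_prop)).aemeasurable]
    _ ≤ ∫⁻ t in Iio k, ENNReal.ofReal π * ENNReal.ofReal (√(2 * P * t + P ^ 2))⁻¹ := by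
        rw [← lintegral_indicator measurableSet_Iio]
        exact lintegral_mono (lintegral_shellKernel_toLp_le hk)
    _ ≤ ENNReal.ofReal π * ENNReal.ofReal (2 * √(2 * P * k + P ^ 2) / (2 * P)) := by
        rw [lintegral_const_mul _ (by fun_prop), Measure.restrict_congr_set Iio_ae_eq_Iic]
        gcongr
        exact lintegral_Iic_ofReal_inv_sqrt_mul_add_le (by positivity) (by positivity)
    _ = ENNReal.ofReal (π * √(P * (P + 2 * k)) / P) := by
        rw [← ENNReal.ofReal_mul pi_pos.le]
        congr 1
        rw [show 2 * P * k + P ^ 2 = P * (P + 2 * k) by ring]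
        field_simp

lemma shellIntegral_le_of_finrank_eq_three (hE : finrank ℝ E = 3) {k : ℝ} (hk : 0 < k) {p : E}
    (hp : p ≠ 0) :
    shellIntegral k p ≤ ENNReal.ofReal (π * √(‖p‖ * (‖p‖ + 2 * k)) / ‖p‖) := by
  obtain ⟨T, hT⟩ := exists_linearIsometryEquiv_apply_eq (v := p) (F := ℝ×ℝ²)
    (by rw [hE, (WithLp.linearEquiv 2 ℝ _).finrank_eq]; simp) (w := WithLp.toLp 2 (‖p‖, 0))
    (by rw [← sq_eq_sq₀ (norm_nonneg _) (norm_nonneg _), WithLp.prod_norm_sq_eq_of_L2]; simp)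
  rw [← shellIntegral_map_linearIsometryEquiv T, hT]
  exact shellIntegral_toLp_le hk (norm_pos_iff.2 hp)

lemma shellIntegral_mul_shellIntegral_neg_le_of_norm_le (hE : finrank ℝ E = 3) {k₁ k₂ : ℝ}
    (hk₂ : 0 < k₂) (hk : k₂ ≤ k₁) {p : E} (hp : ‖p‖ ≤ 3 * k₁) :
    shellIntegral k₁ p * shellIntegral k₂ (-p)
      ≤ ENNReal.ofReal (5 * π ^ 2 * k₁) * ENNReal.ofReal ‖p‖⁻¹ := by
  rcases eq_or_ne p 0 with rfl | hp0
  · simp [shellIntegral_zero]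
  have hk₁ : 0 < k₁ := hk₂.trans_le hk
  have hP : 0 < ‖p‖ := norm_pos_iff.2 hp0
  have hprod : √(‖p‖ * (‖p‖ + 2 * k₁)) * √(‖p‖ * (‖p‖ + 2 * k₂)) ≤ 5 * k₁ * ‖p‖ := by
    rw [← Real.sqrt_mul (by positivity)]
    refine Real.sqrt_le_iff.2 ⟨by positivity, ?_⟩
    calc ‖p‖ * (‖p‖ + 2 * k₁) * (‖p‖ * (‖p‖ + 2 * k₂))
        = ‖p‖ ^ 2 * ((‖p‖ + 2 * k₁) * (‖p‖ + 2 * k₂)) := by ring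
      _ ≤ ‖p‖ ^ 2 * ((5 * k₁) * (5 * k₁)) := by gcongr <;> linarith
      _ = (5 * k₁ * ‖p‖) ^ 2 := by ring
  calc _ ≤ ENNReal.ofReal (π * √(‖p‖ * (‖p‖ + 2 * k₁)) / ‖p‖)
        * ENNReal.ofReal (π * √(‖p‖ * (‖p‖ + 2 * k₂)) / ‖p‖) := by
        gcongr
        · exact shellIntegral_le_of_finrank_eq_three hE (hk₂.trans_le hk) hp0
        · simpa using shellIntegral_le_of_finrank_eq_three hE hk₂ (neg_ne_zero.2 hp0)
    _ ≤ _ := by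
        rw [← ENNReal.ofReal_mul (by positivity), ← ENNReal.ofReal_mul (by positivity)]
        refine ENNReal.ofReal_le_ofReal ?_
        calc π * √(‖p‖ * (‖p‖ + 2 * k₁)) / ‖p‖ * (π * √(‖p‖ * (‖p‖ + 2 * k₂)) / ‖p‖)
            = π ^ 2 * (√(‖p‖ * (‖p‖ + 2 * k₁)) * √(‖p‖ * (‖p‖ + 2 * k₂))) / ‖p‖ ^ 2 := by ring
          _ ≤ π ^ 2 * (5 * k₁ * ‖p‖) / ‖p‖ ^ 2 := by gcongr
          _ = 5 * π ^ 2 * k₁ * ‖p‖⁻¹ := by field_simp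

lemma shellIntegral_mul_shellIntegral_neg_le_of_three_mul_le_norm (hE : finrank ℝ E = 3)
    {k₁ k₂ : ℝ} (hk₂ : 0 < k₂) (hk : k₂ ≤ k₁) {p : E} (hp : 3 * k₁ ≤ ‖p‖) :
    shellIntegral k₁ p * shellIntegral k₂ (-p)
      ≤ ENNReal.ofReal (64 * π ^ 2 * k₁ ^ 3 * k₂ ^ 3)
        * ENNReal.ofReal (‖p‖ ^ 6)⁻¹ := by
  have hk₁ : 0 < k₁ := hk₂.trans_le hk
  have hP : 0 < ‖p‖ := by linarith
  calc _ ≤ ENNReal.ofReal (6 / ‖p‖ ^ 3) * volume (ball (0 : E) k₁)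
        * (ENNReal.ofReal (6 / ‖p‖ ^ 3) * volume (ball (0 : E) k₂)) := by
        gcongr
        · exact shellIntegral_le_of_three_mul_le_norm hp hk₁
        · simpa using shellIntegral_le_of_three_mul_le_norm (p := -p)
            (by rw [norm_neg]; linarith) hk₂
    _ = _ := by
        rw [volume_ball_of_finrank_eq_three hE _ hk₁.le,
          volume_ball_of_finrank_eq_three hE _ hk₂.le,
          ← ENNReal.ofReal_mul (by positivity), ← ENNReal.ofReal_mul (by positivity),
          ← ENNReal.ofReal_mul (by positivity), ← ENNReal.ofReal_mul (by positivity)]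
        congr 1
        field_simp
        ring

lemma lintegral_shellIntegral_mul_shellIntegral_neg_le (hE : finrank ℝ E = 3) {k₁ k₂ : ℝ}
    (hk₂ : 0 < k₂) (hk : k₂ ≤ k₁) :
    ∫⁻ p : E, shellIntegral k₁ p * shellIntegral k₂ (-p)
      ≤ ENNReal.ofReal (94 * π ^ 3 * k₁ ^ 3) := by
  have hk₁ : 0 < k₁ := hk₂.trans_le hk
  rw [← lintegral_add_compl _ (measurableSet_closedBall (x := (0 : E)) (ε := 3 * k₁))]
  calc _ ≤ ENNReal.ofReal (5 * π ^ 2 * k₁) * ENNReal.ofReal (2 * π * (3 * k₁) ^ 2)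
        + ENNReal.ofReal (64 * π ^ 2 * k₁ ^ 3 * k₂ ^ 3)
          * ENNReal.ofReal (4 * π / (3 * (3 * k₁) ^ 3)) := by
        gcongr
        · rw [← lintegral_closedBall_inv_norm hE (by positivity),
            ← lintegral_const_mul' _ _ ENNReal.ofReal_ne_top]
          exact setLIntegral_mono' measurableSet_closedBall fun p hp ↦
            shellIntegral_mul_shellIntegral_neg_le_of_norm_le hE hk₂ hk
              (mem_closedBall_zero_iff.1 hp)
        · rw [← lintegral_compl_closedBall_inv_norm_pow_six hE (by positivity),
            ← lintegral_const_mul' _ _ ENNReal.ofReal_ne_top]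
          exact setLIntegral_mono' measurableSet_closedBall.compl fun p hp ↦
            shellIntegral_mul_shellIntegral_neg_le_of_three_mul_le_norm hE hk₂ hk
              (not_le.1 (mt mem_closedBall_zero_iff.2 hp)).le
    _ ≤ ENNReal.ofReal (94 * π ^ 3 * k₁ ^ 3) := by
        rw [← ENNReal.ofReal_mul (by positivity), ← ENNReal.ofReal_mul (by positivity),
          ← ENNReal.ofReal_add (by positivity) (by positivity)]
        refine ENNReal.ofReal_le_ofReal ?_
        have hfar : 64 * π ^ 2 * k₁ ^ 3 * k₂ ^ 3 * (4 * π / (3 * (3 * k₁) ^ 3))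
            = 256 / 81 * π ^ 3 * k₂ ^ 3 := by
          field_simp
          ring
        rw [hfar]
        have hπ : π ^ 3 * k₂ ^ 3 ≤ π ^ 3 * k₁ ^ 3 := by gcongr
        have hπ₀ : 0 ≤ π ^ 3 * k₁ ^ 3 := by positivity
        nlinarith

end InnerProductSpace

end Belyakov

/-- Estimate of the error term `ℰ₂` in Lemma 5.5: removing the `ε`-regularization from the
Belyakov energy denominator costs at most `C ε k₁³ (k₁/k₂)³`. -/
theorem belyakov_regularization_error_bound :
    ∃ C : ℝ, 0 < C ∧ ∀ (k₁ k₂ ε : ℝ), 0 < k₂ → k₂ ≤ k₁ → 0 < ε →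
      (∫⁻ p : E3, ∫⁻ r in {r : E3 | ‖r‖ < k₁ ∧ k₁ < ‖r + p‖},
        ∫⁻ r' in {r' : E3 | ‖r'‖ < k₂ ∧ k₂ < ‖r' - p‖},
          ENNReal.ofReal
            |1 / (‖r + p‖ ^ 2 - ‖r‖ ^ 2 + ‖r' - p‖ ^ 2 - ‖r'‖ ^ 2 + 2 * ε) ^ 2
              - 1 / (‖r + p‖ ^ 2 - ‖r‖ ^ 2 + ‖r' - p‖ ^ 2 - ‖r'‖ ^ 2) ^ 2|)
        ≤ ENNReal.ofReal (C * ε * k₁ ^ 3 * (k₁ / k₂) ^ 3) := by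
  refine ⟨376 * π ^ 3, by positivity, fun k₁ k₂ ε hk₂ hk hε ↦ ?_⟩
  calc _ ≤ ∫⁻ p : E3, ENNReal.ofReal (4 * ε)
        * (Belyakov.shellIntegral k₁ p * Belyakov.shellIntegral k₂ (-p)) :=
        lintegral_mono fun p ↦
          (Belyakov.lintegral_regularization_error_le hε.le k₁ k₂ p).trans_eq (mul_assoc _ _ _)
    _ ≤ ENNReal.ofReal (4 * ε) * ENNReal.ofReal (94 * π ^ 3 * k₁ ^ 3) := by
        rw [lintegral_const_mul' _ _ ENNReal.ofReal_ne_top]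
        gcongr
        exact Belyakov.lintegral_shellIntegral_mul_shellIntegral_neg_le
          finrank_euclideanSpace_fin hk₂ hk
    _ ≤ ENNReal.ofReal (376 * π ^ 3 * ε * k₁ ^ 3 * (k₁ / k₂) ^ 3) := by
        rw [← ENNReal.ofReal_mul (by positivity)]
        refine ENNReal.ofReal_le_ofReal ?_
        have hratio : 1 ≤ (k₁ / k₂) ^ 3 := one_le_pow₀ ((one_le_div hk₂).2 hk)
        calc 4 * ε * (94 * π ^ 3 * k₁ ^ 3) = 376 * π ^ 3 * ε * k₁ ^ 3 * 1 := by ring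
          _ ≤ 376 * π ^ 3 * ε * k₁ ^ 3 * (k₁ / k₂) ^ 3 := by
            have hk₁ : 0 < k₁ := hk₂.trans_le hk
            gcongr
end

section
/- There exists an absolute constant C > 0 such that for all k, k' > 0 and all ε > 0, ∫_{|p|<k} ∫_{|q|<k'} (k² − |p|² + k'² − |q|² + ε)^{−2} dq dp ≤ C k k' log(1 + 2k²/ε) log(1 + 2k'²/ε). (This follows since (A + B + ε)² ≥ (A + ε/2)(B + ε/2) for A, B ≥ 0, together with the single-ball logarithmic estimate.) -/
/-!
Since `k² - |p|² + ε/2` and `k'² - |q|² + ε/2` are both at most the denominator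
`k² - |p|² + k'² - |q|² + ε`, the integrand is bounded by their product of inverses and the
double integral factorises. In polar coordinates each factor is a radial integral with weight
`r² ≤ k r` on the ball, and `∫₀ᵏ r / (k² - r² + δ) dr = ½ log (1 + k²/δ)` exactly.
-/

open MeasureTheory Real
open scoped ENNReal

open Set Metric Module

theorem integral_mul_inv_sq_sub_sq_add {k δ : ℝ} (hk : 0 ≤ k) (hδ : 0 < δ) :
    ∫ r in (0 : ℝ)..k, r * (k ^ 2 - r ^ 2 + δ)⁻¹ = log (1 + k ^ 2 / δ) / 2 := by
  have hpos : ∀ r ∈ uIcc 0 k, 0 < k ^ 2 - r ^ 2 + δ := by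
    intro r hr
    rw [uIcc_of_le hk] at hr
    nlinarith [hr.1, hr.2]
  have hderiv : ∀ r ∈ uIcc 0 k,
      HasDerivAt (fun r ↦ -log (k ^ 2 - r ^ 2 + δ) / 2) (r * (k ^ 2 - r ^ 2 + δ)⁻¹) r := by
    intro r hr
    have := (((hasDerivAt_pow 2 r).const_sub (k ^ 2)).add_const δ).log (hpos r hr).ne'
    refine (this.neg.div_const 2).congr_deriv ?_
    norm_num
    field_simp
  have hcont : ContinuousOn (fun r ↦ r * (k ^ 2 - r ^ 2 + δ)⁻¹) (uIcc 0 k) :=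
    continuousOn_id.mul ((by fun_prop : Continuous fun r : ℝ ↦ k ^ 2 - r ^ 2 + δ).continuousOn.inv₀
      fun r hr ↦ (hpos r hr).ne')
  rw [intervalIntegral.integral_eq_sub_of_hasDerivAt hderiv hcont.intervalIntegrable,
    one_add_div hδ.ne', log_div (by positivity) hδ.ne']
  rw [sub_self, zero_add, zero_pow two_ne_zero, sub_zero, add_comm δ]
  ring

theorem setIntegral_Ioo_pow_mul_inv_sq_sub_sq_add_le {n : ℕ} {k δ : ℝ} (hn : 2 ≤ n)
    (hk : 0 ≤ k) (hδ : 0 < δ) :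
    ∫ y in Ioo 0 k, y ^ (n - 1) * (k ^ 2 - y ^ 2 + δ)⁻¹ ≤
      k ^ (n - 2) * (log (1 + k ^ 2 / δ) / 2) := by
  have hden : ContinuousOn (fun y : ℝ ↦ (k ^ 2 - y ^ 2 + δ)⁻¹) (Icc 0 k) :=
    (by fun_prop : Continuous fun y : ℝ ↦ k ^ 2 - y ^ 2 + δ).continuousOn.inv₀
      fun y hy ↦ by nlinarith [hy.1, hy.2]
  have hint : ∀ {g : ℝ → ℝ}, Continuous g →
      IntegrableOn (fun y ↦ g y * (k ^ 2 - y ^ 2 + δ)⁻¹) (Ioo 0 k) :=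
    fun hg ↦ (hg.continuousOn.mul hden).integrableOn_Icc.mono_set Ioo_subset_Icc_self
  calc ∫ y in Ioo 0 k, y ^ (n - 1) * (k ^ 2 - y ^ 2 + δ)⁻¹
      ≤ ∫ y in Ioo 0 k, k ^ (n - 2) * y * (k ^ 2 - y ^ 2 + δ)⁻¹ := by
        refine setIntegral_mono_on (hint (by fun_prop)) (hint (by fun_prop)) measurableSet_Ioo
          fun y hy ↦ ?_
        have hpow : y ^ (n - 1) ≤ k ^ (n - 2) * y := by
          rw [show n - 1 = n - 2 + 1 by omega, pow_succ]
          gcongr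
          all_goals linarith [hy.1, hy.2]
        exact mul_le_mul_of_nonneg_right hpow (inv_nonneg.mpr (by nlinarith [hy.1, hy.2]))
    _ = k ^ (n - 2) * ∫ y in (0 : ℝ)..k, y * (k ^ 2 - y ^ 2 + δ)⁻¹ := by
        simp_rw [mul_assoc]
        rw [integral_const_mul, intervalIntegral.integral_of_le hk, integral_Ioc_eq_integral_Ioo]
    _ = k ^ (n - 2) * (log (1 + k ^ 2 / δ) / 2) := by
        rw [integral_mul_inv_sq_sub_sq_add hk hδ]

section Polar

variable {E : Type*} [NormedAddCommGroup E] [NormedSpace ℝ E] [FiniteDimensional ℝ E]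
  [MeasurableSpace E] [BorelSpace E] (μ : Measure E) [μ.IsAddHaarMeasure]

theorem setIntegral_ball_fun_norm_addHaar [Nontrivial E] {F : Type*} [NormedAddCommGroup F]
    [NormedSpace ℝ F] (f : ℝ → F) (r : ℝ) :
    ∫ x in ball (0 : E) r, f ‖x‖ ∂μ =
      finrank ℝ E • μ.real (ball 0 1) • ∫ y in Ioo 0 r, y ^ (finrank ℝ E - 1) • f y := by
  have hind : (ball (0 : E) r).indicator (fun x ↦ f ‖x‖) = fun x ↦ (Iio r).indicator f ‖x‖ := by
    ext x
    simp [indicator]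
  rw [← integral_indicator measurableSet_ball, hind, integral_fun_norm_addHaar,
    ← Ioi_inter_Iio, ← setIntegral_indicator measurableSet_Iio]
  congr 3 with y
  by_cases hy : y < r <;> simp [hy]

theorem lintegral_ball_ofReal_inv_sq_sub_norm_sq_add_le {k δ : ℝ} (hn : 2 ≤ finrank ℝ E)
    (hk : 0 ≤ k) (hδ : 0 < δ) :
    ∫⁻ x in ball (0 : E) k, ENNReal.ofReal (k ^ 2 - ‖x‖ ^ 2 + δ)⁻¹ ∂μ ≤
      ENNReal.ofReal (finrank ℝ E * μ.real (ball 0 1) * k ^ (finrank ℝ E - 2) *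
        (log (1 + k ^ 2 / δ) / 2)) := by
  have : Nontrivial E := nontrivial_of_finrank_pos (R := ℝ) (by omega)
  have hpos : ∀ x ∈ closedBall (0 : E) k, 0 < k ^ 2 - ‖x‖ ^ 2 + δ := fun x hx ↦ by
    nlinarith [mem_closedBall_zero_iff.mp hx, norm_nonneg x]
  have hint : IntegrableOn (fun x : E ↦ (k ^ 2 - ‖x‖ ^ 2 + δ)⁻¹) (ball 0 k) μ :=
    ((by fun_prop : Continuous fun x : E ↦ k ^ 2 - ‖x‖ ^ 2 + δ).continuousOn.inv₀
      fun x hx ↦ (hpos x hx).ne').integrableOn_compact (isCompact_closedBall 0 k)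
      |>.mono_set ball_subset_closedBall
  have hnonneg : 0 ≤ᵐ[μ.restrict (ball 0 k)] fun x : E ↦ (k ^ 2 - ‖x‖ ^ 2 + δ)⁻¹ :=
    ae_restrict_of_forall_mem measurableSet_ball fun x hx ↦
      inv_nonneg.mpr (hpos x (ball_subset_closedBall hx)).le
  rw [← ofReal_integral_eq_lintegral_ofReal hint hnonneg,
    setIntegral_ball_fun_norm_addHaar μ fun r ↦ (k ^ 2 - r ^ 2 + δ)⁻¹]
  simp only [nsmul_eq_mul, smul_eq_mul, mul_assoc]
  gcongr
  exact setIntegral_Ioo_pow_mul_inv_sq_sub_sq_add_le hn hk hδ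

end Polar

theorem setLIntegral_setLIntegral_le_mul {α β : Type*} [MeasurableSpace α] [MeasurableSpace β]
    {μ : Measure α} {ν : Measure β} {s : Set α} {t : Set β} {F : α → β → ℝ≥0∞}
    {f : α → ℝ≥0∞} {g : β → ℝ≥0∞} (hs : MeasurableSet s) (ht : MeasurableSet t)
    (hf : AEMeasurable f (μ.restrict s)) (hg : AEMeasurable g (ν.restrict t))
    (hF : ∀ x ∈ s, ∀ y ∈ t, F x y ≤ f x * g y) :
    ∫⁻ x in s, ∫⁻ y in t, F x y ∂ν ∂μ ≤ (∫⁻ x in s, f x ∂μ) * ∫⁻ y in t, g y ∂ν := by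
  rw [← lintegral_lintegral_mul hf hg]
  exact setLIntegral_mono' hs fun x hx ↦ setLIntegral_mono' ht fun y hy ↦ hF x hx y hy

theorem inv_sq_add_add_le_inv_mul_inv {a b δ : ℝ} (ha : 0 ≤ a) (hb : 0 ≤ b) (hδ : 0 < δ) :
    ((a + b + 2 * δ) ^ 2)⁻¹ ≤ (a + δ)⁻¹ * (b + δ)⁻¹ := by
  rw [← mul_inv, sq]
  exact inv_anti₀ (by positivity)
    (mul_le_mul (by linarith) (by linarith) (by positivity) (by positivity))

theorem sq_sub_norm_sq_nonneg_of_mem_ball {E : Type*} [SeminormedAddCommGroup E] {r : ℝ} {x : E}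
    (hx : x ∈ ball 0 r) : 0 ≤ r ^ 2 - ‖x‖ ^ 2 := by
  nlinarith [mem_ball_zero_iff.mp hx, norm_nonneg x]

theorem ofReal_inv_sq_le_mul_of_mem_ball {E F : Type*} [SeminormedAddCommGroup E]
    [SeminormedAddCommGroup F] {k k' ε : ℝ} {p : E} {q : F} (hp : p ∈ ball 0 k)
    (hq : q ∈ ball 0 k') (hε : 0 < ε) :
    ENNReal.ofReal (1 / (k ^ 2 - ‖p‖ ^ 2 + k' ^ 2 - ‖q‖ ^ 2 + ε) ^ 2) ≤
      ENNReal.ofReal (k ^ 2 - ‖p‖ ^ 2 + ε / 2)⁻¹ * ENNReal.ofReal (k' ^ 2 - ‖q‖ ^ 2 + ε / 2)⁻¹ := by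
  have hp' := sq_sub_norm_sq_nonneg_of_mem_ball hp
  rw [← ENNReal.ofReal_mul (by positivity)]
  refine ENNReal.ofReal_le_ofReal ?_
  convert inv_sq_add_add_le_inv_mul_inv hp' (sq_sub_norm_sq_nonneg_of_mem_ball hq)
    (half_pos hε) using 3
  ring

/-- Double logarithmic estimate over two Fermi balls:
`∫_{|p|<k} ∫_{|q|<k'} (k² - |p|² + k'² - |q|² + ε)⁻² dq dp
  ≤ C k k' log(1 + 2k²/ε) log(1 + 2k'²/ε)`. -/
theorem fermi_double_ball_log_bound :
    ∃ C : ℝ, 0 < C ∧ ∀ (k k' ε : ℝ), 0 < k → 0 < k' → 0 < ε →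
      (∫⁻ p in {p : E3 | ‖p‖ < k}, ∫⁻ q in {q : E3 | ‖q‖ < k'},
          ENNReal.ofReal (1 / (k ^ 2 - ‖p‖ ^ 2 + k' ^ 2 - ‖q‖ ^ 2 + ε) ^ 2))
        ≤ ENNReal.ofReal
            (C * k * k' * Real.log (1 + 2 * k ^ 2 / ε) * Real.log (1 + 2 * k' ^ 2 / ε)) := by
  set V := volume.real (ball (0 : E3) 1)
  have hV : 0 < V :=
    ENNReal.toReal_pos (measure_ball_pos volume 0 one_pos).ne' measure_ball_lt_top.ne
  refine ⟨(3 * V / 2) ^ 2, by positivity, fun k k' ε hk hk' hε ↦ ?_⟩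
  have hdim : finrank ℝ E3 = 3 := finrank_euclideanSpace_fin
  have hlog : 0 ≤ log (1 + 2 * k ^ 2 / ε) := log_nonneg (le_add_of_nonneg_right (by positivity))
  have hball : ∀ r : ℝ, 0 < r → ∫⁻ x in ball (0 : E3) r, ENNReal.ofReal (r ^ 2 - ‖x‖ ^ 2 + ε / 2)⁻¹
      ≤ ENNReal.ofReal (3 * V / 2 * r * log (1 + 2 * r ^ 2 / ε)) := fun r hr ↦ by
    convert lintegral_ball_ofReal_inv_sq_sub_norm_sq_add_le (volume : Measure E3) (by omega) hr.le
      (half_pos hε) using 2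
    rw [hdim]
    simp only [V]
    ring_nf
  simp only [← ball_zero_eq]
  calc _ ≤ (∫⁻ p in ball (0 : E3) k, ENNReal.ofReal (k ^ 2 - ‖p‖ ^ 2 + ε / 2)⁻¹) *
          ∫⁻ q in ball (0 : E3) k', ENNReal.ofReal (k' ^ 2 - ‖q‖ ^ 2 + ε / 2)⁻¹ :=
        setLIntegral_setLIntegral_le_mul measurableSet_ball measurableSet_ball (by fun_prop)
          (by fun_prop) fun p hp q hq ↦ ofReal_inv_sq_le_mul_of_mem_ball hp hq hε
    _ ≤ _ := by
        grw [hball k hk, hball k' hk', ← ENNReal.ofReal_mul (by positivity)]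
        exact le_of_eq (congrArg ENNReal.ofReal (by ring))
end

section
/- There exists an absolute constant C > 0 such that for every x > 0, every e with 0 < e ≤ (3/4)x², and every w ∈ ℝ³ with w ≠ 0, the Lebesgue measure of the intersection of the two spherical shells S := {y ∈ ℝ³ : x² − e ≤ |y|² ≤ x² and x² ≤ |y − w|² ≤ x² + e} satisfies vol(S) ≤ C (1 + 1/x) e² / |w|. -/
/-!
Subtracting the two shell conditions gives `‖w‖²/2 - e ≤ ⟪w, y⟫ ≤ ‖w‖²/2`, so the intersection
lies in the inner shell cut by a slab of width `e / ‖w‖` orthogonal to `w`. Every slice of the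
shell `c ≤ ‖y‖² ≤ c + e` by a plane is a planar annulus `c' ≤ r² ≤ c' + e` of area at most `π e`,
so by Fubini the volume is at most `π e² / ‖w‖`.
-/

open MeasureTheory
open scoped ENNReal

open Metric Module Real

lemma annulus_subset_closedBall_sdiff_ball {E : Type*} [NormedAddCommGroup E] (c d : ℝ) :
    {p : E | c ≤ ‖p‖ ^ 2 ∧ ‖p‖ ^ 2 ≤ c + d} ⊆ closedBall 0 √(c + d) \ ball 0 √c := by
  rintro p ⟨hc, hcd⟩
  simp only [Set.mem_sdiff, mem_closedBall, mem_ball, dist_zero_right, not_lt]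
  exact ⟨le_sqrt_of_sq_le hcd, (sqrt_le_left (norm_nonneg p)).2 hc⟩

lemma volume_annulus_le_s18 {E : Type*} [NormedAddCommGroup E] [InnerProductSpace ℝ E]
    [FiniteDimensional ℝ E] [MeasurableSpace E] [BorelSpace E] (hE : finrank ℝ E = 2)
    (c : ℝ) {d : ℝ} (hd : 0 ≤ d) :
    volume {p : E | c ≤ ‖p‖ ^ 2 ∧ ‖p‖ ^ 2 ≤ c + d} ≤ ENNReal.ofReal (π * d) := by
  have : Nontrivial E := Module.nontrivial_of_finrank_pos (R := ℝ) (by omega)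
  have hball : ∀ r, 0 ≤ r → volume (ball (0 : E) r) = ENNReal.ofReal (π * r ^ 2) := by
    intro r hr
    rw [InnerProductSpace.volume_ball_of_dim_even (k := 1) hE, hE, ← ENNReal.ofReal_pow hr,
      ← ENNReal.ofReal_mul (by positivity)]
    norm_num [mul_comm]
  have hsqrt : √c ≤ √(c + d) := sqrt_le_sqrt (by linarith)
  have hsq : max (c + d) 0 ≤ max c 0 + d :=
    max_le (by linarith [le_max_left c 0]) (by linarith [le_max_right c 0])
  refine (measure_mono (annulus_subset_closedBall_sdiff_ball c d)).trans ?_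
  rw [measure_sdiff_le_iff_le_add measurableSet_ball.nullMeasurableSet
    (ball_subset_closedBall.trans (closedBall_subset_closedBall hsqrt)) measure_ball_lt_top.ne,
    Measure.addHaar_closedBall_eq_addHaar_ball, hball _ (sqrt_nonneg _),
    hball _ (sqrt_nonneg _), ← ENNReal.ofReal_add (by positivity) (by positivity), sq_sqrt',
    sq_sqrt', ← mul_add]
  gcongr

lemma MeasureTheory.Measure.prod_apply_le_mul_of_slice_le {α β : Type*} [MeasurableSpace α]
    [MeasurableSpace β] {μ : Measure α} {ν : Measure β} [SFinite ν] {s : Set (α × β)}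
    (hs : MeasurableSet s) {I : Set α} (hI : MeasurableSet I) (hsI : ∀ p ∈ s, p.1 ∈ I)
    {M : ℝ≥0∞} (hM : ∀ t ∈ I, ν (Prod.mk t ⁻¹' s) ≤ M) :
    μ.prod ν s ≤ M * μ I := by
  have hslice : ∀ t, ν (Prod.mk t ⁻¹' s) ≤ I.indicator (fun _ ↦ M) t := by
    intro t
    by_cases ht : t ∈ I
    · simpa [ht] using hM t ht
    · have : Prod.mk t ⁻¹' s = ∅ :=
        Set.eq_empty_of_forall_notMem fun q hq ↦ ht (hsI _ hq)
      simp [this]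
  rw [Measure.prod_apply hs, ← lintegral_indicator_const hI]
  exact lintegral_mono hslice

lemma volume_shell_inter_slab_le (c : ℝ) {d : ℝ} (hd : 0 ≤ d) (a b : ℝ) :
    volume {z : EuclideanSpace ℝ (Fin 3) | (c ≤ ‖z‖ ^ 2 ∧ ‖z‖ ^ 2 ≤ c + d) ∧ z 0 ∈ Set.Icc a b}
      ≤ ENNReal.ofReal (π * d) * ENNReal.ofReal (b - a) := by
  let φ := (MeasurableEquiv.toLp 2 (Fin 3 → ℝ)).symm.trans
    (MeasurableEquiv.piFinSuccAbove (fun _ ↦ ℝ) 0)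
  have hφ : MeasurePreserving φ :=
    (EuclideanSpace.volume_preserving_symm_measurableEquiv_toLp _).trans
      (volume_preserving_piFinSuccAbove _ 0)
  let U : Set (ℝ × (Fin 2 → ℝ)) :=
    {p | (c ≤ p.1 ^ 2 + ∑ i, p.2 i ^ 2 ∧ p.1 ^ 2 + ∑ i, p.2 i ^ 2 ≤ c + d) ∧ p.1 ∈ Set.Icc a b}
  have hU : MeasurableSet U := by
    have : Measurable fun p : ℝ × (Fin 2 → ℝ) ↦ p.1 ^ 2 + ∑ i, p.2 i ^ 2 := by fun_prop
    exact ((measurableSet_le measurable_const this).inter (measurableSet_le this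
      measurable_const)).inter (measurable_fst measurableSet_Icc)
  have hpre : {z : EuclideanSpace ℝ (Fin 3) | (c ≤ ‖z‖ ^ 2 ∧ ‖z‖ ^ 2 ≤ c + d) ∧
      z 0 ∈ Set.Icc a b} = φ ⁻¹' U := by
    ext z
    simp [U, φ, EuclideanSpace.real_norm_sq_eq, Fin.sum_univ_succ, Fin.tail]
  rw [hpre, hφ.measure_preimage_equiv, Measure.volume_eq_prod, ← Real.volume_Icc]
  refine Measure.prod_apply_le_mul_of_slice_le hU measurableSet_Icc (fun p hp ↦ hp.2) ?_
  intro t _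
  have hslice : Prod.mk t ⁻¹' U ⊆ MeasurableEquiv.toLp 2 (Fin 2 → ℝ) ⁻¹'
      {p : EuclideanSpace ℝ (Fin 2) | c - t ^ 2 ≤ ‖p‖ ^ 2 ∧ ‖p‖ ^ 2 ≤ c - t ^ 2 + d} := by
    rintro q ⟨⟨h₁, h₂⟩, -⟩
    dsimp only at h₁ h₂
    simp only [Fin.sum_univ_two] at h₁ h₂
    simp only [Set.mem_preimage, Set.mem_ofPred_eq, EuclideanSpace.real_norm_sq_eq]
    constructor <;> simp <;> linarith
  have htoLp : MeasurePreserving (MeasurableEquiv.toLp 2 (Fin 2 → ℝ)) :=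
    (EuclideanSpace.volume_preserving_symm_measurableEquiv_toLp (Fin 2)).symm
  refine (measure_mono hslice).trans ?_
  rw [htoLp.measure_preimage_equiv]
  exact volume_annulus_le_s18 (by simp) _ hd

section InnerProductSpace

variable {E : Type*} [NormedAddCommGroup E] [InnerProductSpace ℝ E]

lemma exists_orthonormalBasis_apply_zero_eq {n : ℕ} (hE : finrank ℝ E = n + 1) {u : E}
    (hu : ‖u‖ = 1) : ∃ b : OrthonormalBasis (Fin (n + 1)) ℝ E, b 0 = u := by
  have : FiniteDimensional ℝ E := Module.finite_of_finrank_eq_succ hE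
  have hunit : Orthonormal ℝ (({0} : Set (Fin (n + 1))).domRestrict fun _ ↦ u) :=
    ⟨fun _ ↦ hu, fun i j hij ↦ absurd (Subsingleton.elim i j) hij⟩
  obtain ⟨b, hb⟩ := hunit.exists_orthonormalBasis_extension_of_card_eq (by simpa using hE)
  exact ⟨b, hb 0 rfl⟩

lemma volume_shell_inter_inner_slab_le [FiniteDimensional ℝ E] [MeasurableSpace E]
    [BorelSpace E] (hE : finrank ℝ E = 3) {u : E} (hu : ‖u‖ = 1) (c : ℝ) {d : ℝ} (hd : 0 ≤ d)
    (a b : ℝ) :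
    volume {z : E | (c ≤ ‖z‖ ^ 2 ∧ ‖z‖ ^ 2 ≤ c + d) ∧ inner ℝ u z ∈ Set.Icc a b}
      ≤ ENNReal.ofReal (π * d) * ENNReal.ofReal (b - a) := by
  obtain ⟨β, hβ⟩ := exists_orthonormalBasis_apply_zero_eq hE hu
  have hpre : {z : E | (c ≤ ‖z‖ ^ 2 ∧ ‖z‖ ^ 2 ≤ c + d) ∧ inner ℝ u z ∈ Set.Icc a b} =
      β.measurableEquiv ⁻¹' {z | (c ≤ ‖z‖ ^ 2 ∧ ‖z‖ ^ 2 ≤ c + d) ∧ z 0 ∈ Set.Icc a b} := by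
    ext z
    simp [OrthonormalBasis.measurableEquiv, OrthonormalBasis.repr_apply_apply, hβ]
  rw [hpre, β.measurePreserving_measurableEquiv.measure_preimage_equiv]
  exact volume_shell_inter_slab_le c hd a b

lemma inner_mem_Icc_of_mem_shells {x e : ℝ} {y w : E} (h₁ : x ^ 2 - e ≤ ‖y‖ ^ 2)
    (h₂ : ‖y‖ ^ 2 ≤ x ^ 2) (h₃ : x ^ 2 ≤ ‖y - w‖ ^ 2) (h₄ : ‖y - w‖ ^ 2 ≤ x ^ 2 + e) :
    inner ℝ w y ∈ Set.Icc (‖w‖ ^ 2 / 2 - e) (‖w‖ ^ 2 / 2) := by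
  rw [norm_sub_sq_real, real_inner_comm] at h₃ h₄
  constructor <;> linarith

end InnerProductSpace

/-- Volume bound for the intersection of two spherical shells (eq. volume S1 of Lemma B.2):
for `0 < e ≤ (3/4)x²` and `w ≠ 0`,
`vol{y : x² - e ≤ |y|² ≤ x², x² ≤ |y-w|² ≤ x² + e} ≤ C (1 + 1/x) e² / |w|`. -/
theorem shell_intersection_volume_bound :
    ∃ C : ℝ, 0 < C ∧ ∀ (x e : ℝ) (w : E3), 0 < x → 0 < e → e ≤ 3 / 4 * x ^ 2 → w ≠ 0 →
      volume {y : E3 | (x ^ 2 - e ≤ ‖y‖ ^ 2 ∧ ‖y‖ ^ 2 ≤ x ^ 2)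
            ∧ (x ^ 2 ≤ ‖y - w‖ ^ 2 ∧ ‖y - w‖ ^ 2 ≤ x ^ 2 + e)}
        ≤ ENNReal.ofReal (C * (1 + 1 / x) * e ^ 2 / ‖w‖) := by
  refine ⟨π, pi_pos, fun x e w hx he _ hw ↦ ?_⟩
  have hw₀ : 0 < ‖w‖ := norm_pos_iff.2 hw
  calc
    _ ≤ volume {y : E3 | (x ^ 2 - e ≤ ‖y‖ ^ 2 ∧ ‖y‖ ^ 2 ≤ x ^ 2 - e + e) ∧
        inner ℝ (‖w‖⁻¹ • w) y ∈ Set.Icc (‖w‖ / 2 - e / ‖w‖) (‖w‖ / 2)} := by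
      refine measure_mono ?_
      rintro y ⟨⟨h₁, h₂⟩, h₃, h₄⟩
      obtain ⟨hlo, hhi⟩ := inner_mem_Icc_of_mem_shells h₁ h₂ h₃ h₄
      rw [Set.mem_ofPred_eq, real_inner_smul_left, Set.mem_Icc, ← div_eq_inv_mul,
        le_div_iff₀ hw₀, div_le_iff₀ hw₀]
      refine ⟨⟨h₁, by linarith⟩, ?_, ?_⟩
      · convert hlo using 1; field_simp
      · convert hhi using 1; ring
    _ ≤ ENNReal.ofReal (π * e) * ENNReal.ofReal (‖w‖ / 2 - (‖w‖ / 2 - e / ‖w‖)) :=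
      volume_shell_inter_inner_slab_le (by simp) (norm_smul_inv_norm hw) _ he.le _ _
    _ = ENNReal.ofReal (π * 1 * e ^ 2 / ‖w‖) := by
      rw [← ENNReal.ofReal_mul (by positivity)]
      congr 1
      ring
    _ ≤ _ := by
      gcongr
      linarith [one_div_pos.2 hx]
end

section
/- There exist absolute constants c₀ ∈ (0, 3/4) and C > 0 such that the following holds. Let x ∈ (0,1], let r ∈ ℝ³ with |r| < 1 and set e := 1 − |r|², and assume 0 < e ≤ c₀ x². Let r' ∈ ℝ³ with |r'| < x and 1 − x + 2√e ≤ |r + r'| ≤ 1 + x − 2√e. Define the two shells A_r := {p ∈ ℝ³ : 1 < |r+p|² < 1 + e} and A_{r,r',x} := {p ∈ ℝ³ : x² < |r'−p|² < x² + e}. Then the Lebesgue measure of their intersection satisfies vol(A_r ∩ A_{r,r',x}) ≤ C x^{−1/2} e^{3/2}. -/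
/-!
Subtracting the equations of the two shells shows that a point of `A_r ∩ A_{r,r',x}` lies in a
slab of thickness `e / |r + r'|` orthogonal to `r + r'`. Every plane section of the shell
`A_{r,r',x}` is a planar annulus of area at most `π e`, so by Fubini the intersection has volume
at most `π e² / |r + r'|`, and outside the dangerous region `|r + r'| ≥ 2 √e`.
-/

open MeasureTheory Real
open scoped ENNReal

open Set
open scoped RealInnerProductSpace

theorem EuclideanSpace.volume_annulus_fin_two_le (s t : ℝ) :
    volume {y : EuclideanSpace ℝ (Fin 2) | ‖y‖ ^ 2 ∈ Ioo s t}
      ≤ ENNReal.ofReal (t - s) * ENNReal.ofReal π := by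
  rcases lt_or_ge t s with hts | hst
  · have hempty : {y : EuclideanSpace ℝ (Fin 2) | ‖y‖ ^ 2 ∈ Ioo s t} = ∅ :=
      eq_empty_of_forall_notMem fun y ⟨hs, ht⟩ => by linarith
    simp only [hempty, measure_empty, zero_le]
  have hsub : {y : EuclideanSpace ℝ (Fin 2) | ‖y‖ ^ 2 ∈ Ioo s t}
      ⊆ Metric.ball 0 √t \ Metric.ball 0 √s := by
    rintro y ⟨hs, ht⟩
    simp only [mem_sdiff, Metric.mem_ball, dist_zero_right, not_lt]
    exact ⟨(Real.lt_sqrt (norm_nonneg y)).mpr ht, (Real.sqrt_le_left (norm_nonneg y)).mpr hs.le⟩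
  have hball (c : ℝ) : volume (Metric.ball (0 : EuclideanSpace ℝ (Fin 2)) √c)
      = ENNReal.ofReal c * ENNReal.ofReal π := by
    rw [EuclideanSpace.volume_ball_fin_two, ← ENNReal.ofReal_pow (Real.sqrt_nonneg c)]
    rcases le_total 0 c with hc | hc
    · rw [Real.sq_sqrt hc]
    · simp [Real.sqrt_eq_zero'.mpr hc, ENNReal.ofReal_of_nonpos hc]
  calc volume {y : EuclideanSpace ℝ (Fin 2) | ‖y‖ ^ 2 ∈ Ioo s t}
      ≤ volume (Metric.ball (0 : EuclideanSpace ℝ (Fin 2)) √t \ Metric.ball 0 √s) :=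
        measure_mono hsub
    _ = ENNReal.ofReal t * ENNReal.ofReal π - ENNReal.ofReal s * ENNReal.ofReal π := by
        rw [measure_sdiff (Metric.ball_subset_ball (Real.sqrt_le_sqrt hst))
          measurableSet_ball.nullMeasurableSet measure_ball_lt_top.ne, hball, hball]
    _ ≤ ENNReal.ofReal (t - s) * ENNReal.ofReal π := by
        rw [← ENNReal.sub_mul fun _ _ => ENNReal.ofReal_ne_top]
        gcongr
        exact tsub_le_iff_right.mpr (by simpa using ENNReal.ofReal_add_le (p := t - s) (q := s))

theorem MeasureTheory.Measure.prod_le_mul_of_forall_slice_le {α β : Type*} [MeasurableSpace α]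
    [MeasurableSpace β] (μ : Measure α) (ν : Measure β) [SFinite ν] {U : Set (α × β)}
    (hU : MeasurableSet U) {I : Set α} (hI : MeasurableSet I) (hUI : ∀ q ∈ U, q.1 ∈ I)
    {m : ℝ≥0∞} (hm : ∀ a ∈ I, ν (Prod.mk a ⁻¹' U) ≤ m) : μ.prod ν U ≤ μ I * m := by
  have hslice (a : α) : ν (Prod.mk a ⁻¹' U) ≤ I.indicator (fun _ => m) a := by
    by_cases ha : a ∈ I
    · simpa [ha] using hm a ha
    · have : Prod.mk a ⁻¹' U = ∅ := eq_empty_of_forall_notMem fun b hb => ha (hUI _ hb)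
      simp [this]
  calc μ.prod ν U = ∫⁻ a, ν (Prod.mk a ⁻¹' U) ∂μ := Measure.prod_apply hU
    _ ≤ ∫⁻ a, I.indicator (fun _ => m) a ∂μ := lintegral_mono hslice
    _ = μ I * m := by rw [lintegral_indicator_const hI, mul_comm]

theorem volume_prod_slab_inter_shell_le (a h σ e : ℝ) :
    volume {q : ℝ × EuclideanSpace ℝ (Fin 2) |
        q.1 ∈ Ioo a (a + h) ∧ q.1 ^ 2 + ‖q.2‖ ^ 2 ∈ Ioo σ (σ + e)}
      ≤ ENNReal.ofReal h * (ENNReal.ofReal e * ENNReal.ofReal π) := by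
  have hU : MeasurableSet {q : ℝ × EuclideanSpace ℝ (Fin 2) |
      q.1 ∈ Ioo a (a + h) ∧ q.1 ^ 2 + ‖q.2‖ ^ 2 ∈ Ioo σ (σ + e)} := by
    measurability
  rw [Measure.volume_eq_prod]
  refine (Measure.prod_le_mul_of_forall_slice_le _ _ hU measurableSet_Ioo (fun q hq => hq.1)
    fun w _ => ?_).trans_eq (by rw [Real.volume_Ioo, add_sub_cancel_left])
  calc volume (Prod.mk w ⁻¹' _)
      ≤ volume {y : EuclideanSpace ℝ (Fin 2) | ‖y‖ ^ 2 ∈ Ioo (σ - w ^ 2) (σ - w ^ 2 + e)} :=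
        measure_mono fun y hy => ⟨by linarith [hy.2.1], by linarith [hy.2.2]⟩
    _ ≤ _ := (EuclideanSpace.volume_annulus_fin_two_le _ _).trans_eq (by rw [add_sub_cancel_left])

theorem EuclideanSpace.exists_measurePreserving_inner_fst {k : ℕ}
    {n : EuclideanSpace ℝ (Fin (k + 1))} (hn : ‖n‖ = 1) :
    ∃ Φ : EuclideanSpace ℝ (Fin (k + 1)) → ℝ × EuclideanSpace ℝ (Fin k),
      MeasurePreserving Φ ∧ ∀ p, (Φ p).1 = ⟪n, p⟫ ∧ ‖p‖ ^ 2 = (Φ p).1 ^ 2 + ‖(Φ p).2‖ ^ 2 := by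
  let e₀ : EuclideanSpace ℝ (Fin (k + 1)) := EuclideanSpace.single 0 1
  let f := Submodule.reflection (ℝ ∙ (n - e₀))ᗮ
  have hfn : f n = e₀ := Submodule.reflection_sub (by simp [e₀, hn])
  let split (p : EuclideanSpace ℝ (Fin (k + 1))) : ℝ × EuclideanSpace ℝ (Fin k) :=
    (p 0, WithLp.toLp 2 fun j => p j.succ)
  have hsplit : MeasurePreserving split := by
    have := (MeasurePreserving.id volume).prod (PiLp.volume_preserving_toLp (Fin k)) |>.comp
      ((volume_preserving_piFinSuccAbove (fun _ => ℝ) 0).comp (PiLp.volume_preserving_ofLp _))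
    rw [← Measure.volume_eq_prod] at this
    convert this using 1
    ext p <;> simp [split, MeasurableEquiv.piFinSuccAbove, Fin.insertNthEquiv, Fin.tail]
  refine ⟨split ∘ f, hsplit.comp f.measurePreserving, fun p => ⟨?_, ?_⟩⟩
  · calc (f p) 0 = ⟪e₀, f p⟫ := by simp [e₀, EuclideanSpace.inner_single_left]
      _ = ⟪n, p⟫ := by rw [← hfn, LinearIsometryEquiv.inner_map_map]
  · rw [← f.norm_map, EuclideanSpace.norm_sq_eq, EuclideanSpace.norm_sq_eq, Fin.sum_univ_succ]
    simp [split]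

theorem volume_slab_inter_shell_le {n : E3} (hn : ‖n‖ = 1) (a h σ e : ℝ) :
    volume {p : E3 | ⟪n, p⟫ ∈ Ioo a (a + h) ∧ ‖p‖ ^ 2 ∈ Ioo σ (σ + e)}
      ≤ ENNReal.ofReal h * (ENNReal.ofReal e * ENNReal.ofReal π) := by
  obtain ⟨Φ, hΦ, hΦn⟩ := EuclideanSpace.exists_measurePreserving_inner_fst hn
  have hpre : {p : E3 | ⟪n, p⟫ ∈ Ioo a (a + h) ∧ ‖p‖ ^ 2 ∈ Ioo σ (σ + e)} =
      Φ ⁻¹' {q | q.1 ∈ Ioo a (a + h) ∧ q.1 ^ 2 + ‖q.2‖ ^ 2 ∈ Ioo σ (σ + e)} := by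
    ext p
    simp only [mem_preimage, mem_ofPred_eq, (hΦn p).2, (hΦn p).1]
  rw [hpre, hΦ.measure_preimage (by measurability)]
  exact volume_prod_slab_inter_shell_le a h σ e

theorem volume_shell_inter_shell_le {u v : E3} (huv : u ≠ v) (ρ σ e : ℝ) :
    volume ({p | ‖p - u‖ ^ 2 ∈ Ioo ρ (ρ + e)} ∩ {p | ‖p - v‖ ^ 2 ∈ Ioo σ (σ + e)})
      ≤ ENNReal.ofReal (e / dist u v) * (ENNReal.ofReal e * ENNReal.ofReal π) := by
  set d := dist u v
  have hd : 0 < d := dist_pos.mpr huv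
  set n : E3 := d⁻¹ • (v - u)
  have hn : ‖n‖ = 1 := by
    rw [norm_smul, norm_inv, Real.norm_of_nonneg hd.le, ← dist_eq_norm, dist_comm,
      inv_mul_cancel₀ hd.ne']
  have hvu : v - u = d • n := by rw [smul_inv_smul₀ hd.ne']
  set a := (ρ - σ - e - d ^ 2) / (2 * d)
  -- `‖p - u‖² - ‖p - v‖² = 2 d ⟪n, p - v⟫ + d²` pins `⟪n, p - v⟫` to an interval of length `e / d`
  have hsub : {p | ‖p - u‖ ^ 2 ∈ Ioo ρ (ρ + e)} ∩ {p | ‖p - v‖ ^ 2 ∈ Ioo σ (σ + e)} ⊆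
      (· + -v) ⁻¹' {q | ⟪n, q⟫ ∈ Ioo a (a + e / d) ∧ ‖q‖ ^ 2 ∈ Ioo σ (σ + e)} := by
    rintro p ⟨⟨hu₁, hu₂⟩, hv⟩
    rw [mem_preimage, ← sub_eq_add_neg]
    have hpu : ‖p - u‖ ^ 2 = ‖p - v‖ ^ 2 + 2 * d * ⟪n, p - v⟫ + d ^ 2 := by
      rw [show p - u = (p - v) + d • n by rw [← hvu]; abel, norm_add_sq_real, norm_smul,
        real_inner_smul_right, real_inner_comm, hn, Real.norm_of_nonneg hd.le]
      ring
    refine ⟨⟨?_, ?_⟩, hv⟩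
    · rw [div_lt_iff₀ (by positivity)]; nlinarith [hv.2]
    · rw [div_add_div _ _ (by positivity) hd.ne', lt_div_iff₀ (by positivity)]; nlinarith [hv.1]
  calc _ ≤ volume ((· + -v) ⁻¹' {q | ⟪n, q⟫ ∈ Ioo a (a + e / d) ∧ ‖q‖ ^ 2 ∈ Ioo σ (σ + e)}) :=
        measure_mono hsub
    _ ≤ _ := by
        rw [measure_preimage_add_right]
        exact volume_slab_inter_shell_le hn _ _ _ _

theorem div_mul_le_rpow_three_halves {e d : ℝ} (he : 0 < e) (hd : 2 * √e ≤ d) :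
    e / d * e ≤ e ^ ((3 : ℝ) / 2) / 2 := by
  have hpow : e ^ ((3 : ℝ) / 2) = √e * e := by
    rw [show (3 : ℝ) / 2 = 1 / 2 + 1 by norm_num, rpow_add he, rpow_one, sqrt_eq_rpow]
  have hslab : e / d ≤ √e / 2 := by
    rw [div_le_div_iff₀ (by linarith [sqrt_pos.mpr he]) two_pos]
    nlinarith [mul_self_sqrt he.le, mul_le_mul_of_nonneg_left hd (sqrt_nonneg e)]
  rw [hpow]
  nlinarith

/-- Estimate (eq. estimate area ar arprime nondangerous) of Lemma B.1: outside the dangerous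
region, the intersection of the shells `A_r = {p : 1 < |r+p|² < 1+e}` and
`A_{r,r',x} = {p : x² < |r'-p|² < x²+e}` has volume at most `C x^{-1/2} e^{3/2}`. -/
theorem shell_shell_nondangerous_volume_bound :
    ∃ c₀ C : ℝ, 0 < c₀ ∧ c₀ < 3 / 4 ∧ 0 < C ∧
    ∀ (x : ℝ) (r r' : E3), 0 < x → x ≤ 1 → ‖r‖ < 1 →
      0 < 1 - ‖r‖ ^ 2 → 1 - ‖r‖ ^ 2 ≤ c₀ * x ^ 2 →
      ‖r'‖ < x →
      1 - x + 2 * Real.sqrt (1 - ‖r‖ ^ 2) ≤ ‖r + r'‖ →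
      ‖r + r'‖ ≤ 1 + x - 2 * Real.sqrt (1 - ‖r‖ ^ 2) →
      volume ({p : E3 | 1 < ‖r + p‖ ^ 2 ∧ ‖r + p‖ ^ 2 < 1 + (1 - ‖r‖ ^ 2)}
          ∩ {p : E3 | x ^ 2 < ‖r' - p‖ ^ 2 ∧ ‖r' - p‖ ^ 2 < x ^ 2 + (1 - ‖r‖ ^ 2)})
        ≤ ENNReal.ofReal (C * x ^ (-(1 : ℝ) / 2) * (1 - ‖r‖ ^ 2) ^ ((3 : ℝ) / 2)) := by
  refine ⟨1 / 2, π, by norm_num, by norm_num, pi_pos, ?_⟩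
  intro x r r' hx hx1 _ he _ _ hlow _
  set e := 1 - ‖r‖ ^ 2
  have hd : 2 * √e ≤ ‖r + r'‖ := by linarith
  have hdist : dist (-r) r' = ‖r + r'‖ := by rw [dist_eq_norm, ← norm_neg]; congr 1; abel
  have hne : -r ≠ r' := dist_pos.mp (by linarith [Real.sqrt_pos.mpr he])
  have hsets : {p : E3 | 1 < ‖r + p‖ ^ 2 ∧ ‖r + p‖ ^ 2 < 1 + e}
      ∩ {p : E3 | x ^ 2 < ‖r' - p‖ ^ 2 ∧ ‖r' - p‖ ^ 2 < x ^ 2 + e}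
      = {p | ‖p - -r‖ ^ 2 ∈ Ioo 1 (1 + e)} ∩ {p | ‖p - r'‖ ^ 2 ∈ Ioo (x ^ 2) (x ^ 2 + e)} := by
    simp only [sub_neg_eq_add, add_comm _ r, norm_sub_rev _ r']
    rfl
  calc _ ≤ ENNReal.ofReal (e / ‖r + r'‖) * (ENNReal.ofReal e * ENNReal.ofReal π) :=
        hsets ▸ hdist ▸ volume_shell_inter_shell_le hne 1 (x ^ 2) e
    _ = ENNReal.ofReal (e / ‖r + r'‖ * e * π) := by
        rw [← ENNReal.ofReal_mul he.le, ← ENNReal.ofReal_mul (by positivity), mul_assoc]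
    _ ≤ ENNReal.ofReal (π * 1 * e ^ ((3 : ℝ) / 2)) := by
        refine ENNReal.ofReal_le_ofReal ?_
        nlinarith [mul_le_mul_of_nonneg_right (div_mul_le_rpow_three_halves he hd) pi_pos.le,
          rpow_nonneg he.le ((3 : ℝ) / 2), pi_pos]
    _ ≤ _ := by
        gcongr
        exact one_le_rpow_of_pos_of_le_one_of_nonpos hx hx1 (by norm_num)
end
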